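/- arXiv:1905.02942 — 7 statements merged into one kernel-verified Lean document; each statement's English description precedes it below -/
import Mathlib

section
/- There exists a constant c > 0, depending only on c₁, c₂, m, λ₀, λ₁, such that for every (t,r) ∈ Ω_c one has c·(r−r₁)²/t² ≤ λ_c(t,r) − λ₀ ≤ c₂²·(r−r₁)²/t². (This is the two-sided estimate (3.6) for the stationary point in the paper's Lemma 3.1.) -/
open MeasureTheory

/-- Two-sided estimate (3.6) for the stationary point in the
paper's Lemma 3.1: there is `c > 0` depending only on `c₁, c₂, m, λ₀, λ₁` such
that for all `(t,r) ∈ Ω_c`,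
`c·(r−r₁)²/t² ≤ λ_c(t,r) − λ₀ ≤ c₂²·(r−r₁)²/t²`. -/
theorem stationary_point_two_sided_estimate
    (lam0 lam1 r1 c1 c2 m : ℝ)
    (hlam : lam0 < lam1) (hr1 : 1 ≤ r1) (hc1 : 0 < c1) (hc12 : c1 ≤ c2)
    (hm : m ≤ (lam0 + lam1) / 2) :
    ∃ c > 0, ∀ w q : ℝ → ℝ,
      ContinuousOn w (Set.Ici r1) →
      (∀ s, r1 ≤ s → c1 ≤ w s) → (∀ s, r1 ≤ s → w s ≤ c2) →
      ContinuousOn q (Set.Ici r1) →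
      (∀ s, r1 ≤ s → m ≤ q s) → (∀ s, r1 ≤ s → q s ≤ (lam0 + lam1) / 2) →
      ∀ T : ℝ → ℝ → ℝ,
      (∀ lam r, T lam r = ∫ s in r1..r, w s / Real.sqrt (2 * (lam - q s))) →
      ∀ Ωc : Set (ℝ × ℝ),
      Ωc = {p : ℝ × ℝ | 0 < p.1 ∧ r1 < p.2 ∧ p.1 < T lam1 p.2} →
      ∀ lamc : ℝ → ℝ → ℝ,
      (∀ p ∈ Ωc, lam1 < lamc p.1 p.2 ∧ T (lamc p.1 p.2) p.2 = p.1) →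
      ∀ p ∈ Ωc,
        c * (p.2 - r1) ^ 2 / p.1 ^ 2 ≤ lamc p.1 p.2 - lam0 ∧
        lamc p.1 p.2 - lam0 ≤ c2 ^ 2 * (p.2 - r1) ^ 2 / p.1 ^ 2 := by
  have hd : 0 < lam1 - lam0 := by linarith
  obtain ⟨M, hMdef⟩ : ∃ M : ℝ, M = max 0 (lam0 - m) := ⟨_, rfl⟩
  have hM0 : 0 ≤ M := hMdef ▸ le_max_left _ _
  have hMm : lam0 - m ≤ M := hMdef ▸ le_max_right _ _
  obtain ⟨K, hKdef⟩ : ∃ K : ℝ, K = 1 + M / (lam1 - lam0) := ⟨_, rfl⟩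
  have hdiv0 : 0 ≤ M / (lam1 - lam0) := div_nonneg hM0 hd.le
  have hK1 : 1 ≤ K := by rw [hKdef]; linarith
  have hKpos : 0 < K := lt_of_lt_of_le one_pos hK1
  have hKM : (lam1 - lam0) * (M / (lam1 - lam0)) = M := by field_simp
  refine ⟨c1 ^ 2 / (2 * K), by positivity, ?_⟩
  intro w q hwc hw1 hw2 hqc hq1 hq2 T hT Ωc hΩ lamc hlamc p hp
  obtain ⟨hlamgt, hTeq⟩ := hlamc p hp
  rw [hΩ] at hp
  obtain ⟨ht, hrr, hTr⟩ := hp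
  obtain ⟨t, r⟩ := p
  simp only at ht hrr hTr hlamgt hTeq ⊢
  obtain ⟨lam, hlamdef⟩ : ∃ x : ℝ, lamc t r = x := ⟨_, rfl⟩
  rw [hlamdef] at hlamgt hTeq ⊢
  have hApos : 0 < lam - lam0 := by linarith
  have hAgt : lam1 - lam0 < lam - lam0 := by linarith
  -- pointwise facts on [r1, r]
  have hpos : ∀ s ∈ Set.Icc r1 r, 0 < 2 * (lam - q s) := by
    intro s hs; have := hq2 s hs.1; nlinarith
  have hub : ∀ s ∈ Set.Icc r1 r, lam - lam0 ≤ 2 * (lam - q s) := by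
    intro s hs; have := hq2 s hs.1; nlinarith
  have hlb : ∀ s ∈ Set.Icc r1 r, 2 * (lam - q s) ≤ 2 * K * (lam - lam0) := by
    intro s hs
    have h1 := hq1 s hs.1
    have h4 : (lam1 - lam0) * (M / (lam1 - lam0)) ≤ (lam - lam0) * (M / (lam1 - lam0)) :=
      mul_le_mul_of_nonneg_right hAgt.le hdiv0
    have h5 : M ≤ (lam - lam0) * (M / (lam1 - lam0)) := by linarith
    have h6 : K * (lam - lam0) = (lam - lam0) + (lam - lam0) * (M / (lam1 - lam0)) := by
      rw [hKdef]; ring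
    nlinarith
  -- continuity and integrability
  have hsub : Set.Icc r1 r ⊆ Set.Ici r1 := Set.Icc_subset_Ici_self
  have hcont : ContinuousOn (fun s => w s / Real.sqrt (2 * (lam - q s))) (Set.Icc r1 r) := by
    apply ContinuousOn.div (hwc.mono hsub)
    · exact Real.continuous_sqrt.comp_continuousOn
        (continuousOn_const.mul (continuousOn_const.sub (hqc.mono hsub)))
    · intro s hs
      exact ne_of_gt (Real.sqrt_pos.mpr (hpos s hs))
  have hInt : IntervalIntegrable (fun s => w s / Real.sqrt (2 * (lam - q s)))
      volume r1 r := hcont.intervalIntegrable_of_Icc hrr.le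
  have hteq : t = ∫ s in r1..r, w s / Real.sqrt (2 * (lam - q s)) := by
    rw [← hT]; exact hTeq.symm
  have hsA : 0 < Real.sqrt (lam - lam0) := Real.sqrt_pos.mpr hApos
  have hBpos : 0 < 2 * K * (lam - lam0) := by positivity
  have hsB : 0 < Real.sqrt (2 * K * (lam - lam0)) := Real.sqrt_pos.mpr hBpos
  have hc2pos : 0 < c2 := lt_of_lt_of_le hc1 hc12
  -- upper bound on t
  have hUB : t ≤ (r - r1) * (c2 / Real.sqrt (lam - lam0)) := by
    rw [hteq]
    have h := intervalIntegral.integral_mono_on hrr.le hInt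
      (intervalIntegrable_const (c := c2 / Real.sqrt (lam - lam0)))
      (fun s hs =>
        div_le_div₀ hc2pos.le (hw2 s hs.1) hsA (Real.sqrt_le_sqrt (hub s hs)))
    rwa [intervalIntegral.integral_const, smul_eq_mul] at h
  -- lower bound on t
  have hLB : (r - r1) * (c1 / Real.sqrt (2 * K * (lam - lam0))) ≤ t := by
    rw [hteq]
    have h := intervalIntegral.integral_mono_on hrr.le
      (intervalIntegrable_const (c := c1 / Real.sqrt (2 * K * (lam - lam0)))) hInt
      (fun s hs =>
        div_le_div₀ (hc1.trans_le (hw1 s hs.1)).le (hw1 s hs.1)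
          (Real.sqrt_pos.mpr (hpos s hs)) (Real.sqrt_le_sqrt (hlb s hs)))
    rwa [intervalIntegral.integral_const, smul_eq_mul] at h
  have hrpos : 0 < r - r1 := by linarith
  have hsA2 : Real.sqrt (lam - lam0) ^ 2 = lam - lam0 := Real.sq_sqrt hApos.le
  have hsB2 : Real.sqrt (2 * K * (lam - lam0)) ^ 2 = 2 * K * (lam - lam0) :=
    Real.sq_sqrt hBpos.le
  have ht2 : (0:ℝ) < t ^ 2 := by positivity
  constructor
  · -- lower estimate
    rw [div_le_iff₀ ht2]
    have h1 : (r - r1) * c1 ≤ t * Real.sqrt (2 * K * (lam - lam0)) := by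
      have h := mul_le_mul_of_nonneg_right hLB hsB.le
      calc (r - r1) * c1
          = (r - r1) * (c1 / Real.sqrt (2 * K * (lam - lam0)))
            * Real.sqrt (2 * K * (lam - lam0)) := by field_simp
        _ ≤ t * Real.sqrt (2 * K * (lam - lam0)) := h
    have h3 : (r - r1) ^ 2 * c1 ^ 2 ≤ t ^ 2 * (2 * K * (lam - lam0)) := by
      have h2 : ((r - r1) * c1) ^ 2 ≤ (t * Real.sqrt (2 * K * (lam - lam0))) ^ 2 :=
        pow_le_pow_left₀ (by positivity) h1 2
      calc (r - r1) ^ 2 * c1 ^ 2 = ((r - r1) * c1) ^ 2 := by ring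
        _ ≤ (t * Real.sqrt (2 * K * (lam - lam0))) ^ 2 := h2
        _ = t ^ 2 * (2 * K * (lam - lam0)) := by rw [mul_pow, hsB2]
    rw [div_mul_eq_mul_div, div_le_iff₀ (by positivity : (0:ℝ) < 2 * K)]
    linarith
  · -- upper estimate
    rw [le_div_iff₀ ht2]
    have h1 : t * Real.sqrt (lam - lam0) ≤ (r - r1) * c2 := by
      have h := mul_le_mul_of_nonneg_right hUB hsA.le
      calc t * Real.sqrt (lam - lam0)
          ≤ (r - r1) * (c2 / Real.sqrt (lam - lam0)) * Real.sqrt (lam - lam0) := h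
        _ = (r - r1) * c2 := by field_simp
    have h3 : t ^ 2 * (lam - lam0) ≤ (r - r1) ^ 2 * c2 ^ 2 := by
      have h2 : (t * Real.sqrt (lam - lam0)) ^ 2 ≤ ((r - r1) * c2) ^ 2 :=
        pow_le_pow_left₀ (by positivity) h1 2
      calc t ^ 2 * (lam - lam0) = (t * Real.sqrt (lam - lam0)) ^ 2 := by rw [mul_pow, hsA2]
        _ ≤ ((r - r1) * c2) ^ 2 := h2
        _ = (r - r1) ^ 2 * c2 ^ 2 := by ring
    linarith
end

section
/- Define K₁(t,r) = ∫_{r₁}^r w(s)·√(2(λ_c(t,r)−q(s))) ds − t·λ_c(t,r) on Ω_c. Then K₁ is continuously differentiable on Ω_c with ∂_tK₁(t,r) = −λ_c(t,r) and ∂_rK₁(t,r) = w(r)·√(2(λ_c(t,r)−q(r))); consequently K₁ solves the Hamilton–Jacobi equation ∂_tK₁ + (1/2)·(w(r)^{−1}·∂_rK₁)² + q(r) = 0 on Ω_c. (These are identities (3.9) and (3.10) of the paper's Lemma 3.1.) -/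
/-!
For fixed `(t, r)` the phase `λ ↦ Θ₁(λ, t, r)` is concave (the square root is concave) with
derivative `T(λ, r) - t`, so `K₁(t, r) = Θ₁(λ_c, t, r)` is its maximum over `λ ≥ λ₁`. By the
envelope principle the derivative of `K₁` is the `(t, r)`-gradient `(-λ, w(r)√(2(λ - q(r))))` of
`Θ₁` frozen at `λ = λ_c`; this needs only the continuity of `λ_c`, which follows from the strict
monotonicity of `T` in `λ`. The same continuity makes `K₁` of class `C¹`, and the Hamilton–Jacobi
equation is the identity `½ (√(2(λ - q)))² = λ - q`.
-/

open MeasureTheory Set Filter Topology Asymptotics ContinuousLinearMap Interval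

theorem ContinuousOn.comp_max_const {α β : Type*} [TopologicalSpace α] [LinearOrder α]
    [OrderClosedTopology α] [TopologicalSpace β] {f : α → β} {a : α}
    (hf : ContinuousOn f (Ici a)) : Continuous fun x => f (max x a) :=
  hf.comp_continuous (continuous_id.max continuous_const) fun x => le_max_right x a

theorem intervalIntegral.integral_comp_max_const {E : Type*} [NormedAddCommGroup E]
    [NormedSpace ℝ E] (f : ℝ → E) {a b : ℝ} (hab : a ≤ b) :
    ∫ s in a..b, f (max s a) = ∫ s in a..b, f s :=
  integral_congr fun s hs => by rw [max_eq_left (uIcc_of_le hab ▸ hs).1]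

theorem hasFDerivAt_envelope {Λ E : Type*} [TopologicalSpace Λ] [NormedAddCommGroup E]
    [NormedSpace ℝ E] {Φ : Λ → E → ℝ} {μ : E → Λ} {L : E →L[ℝ] ℝ} {p₀ : E}
    (hμ : ContinuousAt μ p₀) (hmax : ∀ᶠ p in 𝓝 p₀, Φ (μ p₀) p ≤ Φ (μ p) p)
    (hmax₀ : ∀ᶠ p in 𝓝 p₀, Φ (μ p) p₀ ≤ Φ (μ p₀) p₀)
    (hΦ : (fun x : Λ × E => Φ x.1 x.2 - Φ x.1 p₀ - L (x.2 - p₀)) =o[𝓝 (μ p₀, p₀)]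
      fun x => x.2 - p₀) :
    HasFDerivAt (fun p => Φ (μ p) p) L p₀ := by
  have hfixed := hΦ.comp_tendsto (continuousAt_const.prodMk continuousAt_id : ContinuousAt
    (fun p => (μ p₀, p)) p₀)
  have hmoving := hΦ.comp_tendsto (hμ.prodMk continuousAt_id)
  -- `Φ (μ p) p - Φ (μ p₀) p₀` is squeezed between the increments of `Φ (μ p₀)` and `Φ (μ p)`
  refine HasFDerivAt.of_isLittleO <| IsBigO.trans_isLittleO (IsBigO.of_bound' ?_)
    (hfixed.norm_left.add hmoving.norm_left)
  filter_upwards [hmax, hmax₀] with p hp hp₀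
  simp only [Function.comp_apply, id, Real.norm_eq_abs]
  set A := Φ (μ p₀) p - Φ (μ p₀) p₀ - L (p - p₀)
  set B := Φ (μ p) p - Φ (μ p) p₀ - L (p - p₀)
  rw [abs_of_nonneg (by positivity : 0 ≤ |A| + |B|), abs_le]
  constructor <;> linarith [neg_abs_le A, le_abs_self B, abs_nonneg A, abs_nonneg B]

theorem continuousAt_of_strictAntiOn_of_apply_eq {X : Type*} [TopologicalSpace X]
    {F : ℝ → X → ℝ} {h φ : X → ℝ} {s : Set ℝ} {x₀ : X} (hs : s ∈ 𝓝 (φ x₀))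
    (hF : ∀ a ∈ s, ContinuousAt (fun x => F a x - h x) x₀)
    (hφ : ∀ᶠ x in 𝓝 x₀, StrictAntiOn (F · x) s ∧ φ x ∈ s ∧ F (φ x) x = h x) :
    ContinuousAt φ x₀ := by
  refine Metric.continuousAt_iff'.2 fun ε hε => ?_
  obtain ⟨δ, hδ, hball⟩ := Metric.mem_nhds_iff.1 hs
  obtain ⟨e, he, heε, heδ⟩ : ∃ e > 0, e < ε ∧ e < δ :=
    ⟨min ε δ / 2, by positivity, by linarith [min_le_left ε δ, lt_min hε hδ],
      by linarith [min_le_right ε δ, lt_min hε hδ]⟩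
  have hlo : φ x₀ - e ∈ s := hball (by simpa [abs_of_pos he] using heδ)
  have hhi : φ x₀ + e ∈ s := hball (by simpa [abs_of_pos he] using heδ)
  obtain ⟨hanti₀, hφs₀, hφ₀⟩ := hφ.self_of_nhds
  have hlo₀ : 0 < F (φ x₀ - e) x₀ - h x₀ := by
    rw [← hφ₀, sub_pos]; exact hanti₀ hlo hφs₀ (by linarith)
  have hhi₀ : F (φ x₀ + e) x₀ - h x₀ < 0 := by
    rw [← hφ₀, sub_neg]; exact hanti₀ hφs₀ hhi (by linarith)
  filter_upwards [hφ, (hF _ hlo).eventually (lt_mem_nhds hlo₀),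
    (hF _ hhi).eventually (gt_mem_nhds hhi₀)] with x ⟨hanti, hφs, hφx⟩ hlo_x hhi_x
  rw [← hφx, sub_pos] at hlo_x
  rw [← hφx, sub_neg] at hhi_x
  have h₁ := (hanti.lt_iff_gt hφs hlo).1 hlo_x
  have h₂ := (hanti.lt_iff_gt hhi hφs).1 hhi_x
  rw [Real.dist_eq, abs_sub_lt_iff]
  constructor <;> linarith

theorem isLittleO_integral_sub_mul {g : ℝ → ℝ → ℝ} (hg : Continuous (Function.uncurry g))
    (a₀ r₀ : ℝ) :
    (fun x : ℝ × ℝ => (∫ s in r₀..x.2, g x.1 s) - (x.2 - r₀) * g a₀ r₀) =o[𝓝 (a₀, r₀)]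
      fun x => x.2 - r₀ := by
  refine isLittleO_iff.2 fun ε hε => ?_
  obtain ⟨δ, hδ, hg₀⟩ := Metric.continuousAt_iff.1 (hg.continuousAt (x := (a₀, r₀))) ε hε
  filter_upwards [Metric.ball_mem_nhds _ hδ] with x hx
  have hclose : ∀ s ∈ Ι r₀ x.2, ‖g x.1 s - g a₀ r₀‖ ≤ ε := by
    intro s hs
    have hs' : |s - r₀| ≤ |x.2 - r₀| := abs_sub_left_of_mem_uIcc (uIoc_subset_uIcc hs)
    refine (hg₀ (x := (x.1, s)) ?_).le
    rw [Metric.mem_ball, Prod.dist_eq] at hx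
    rw [Prod.dist_eq]
    exact max_lt (lt_of_le_of_lt (le_max_left _ _) hx)
      (lt_of_le_of_lt (hs'.trans (le_max_right _ _)) hx)
  have hg_int : IntervalIntegrable (g x.1) volume r₀ x.2 :=
    (hg.uncurry_left x.1).intervalIntegrable _ _
  calc ‖(∫ s in r₀..x.2, g x.1 s) - (x.2 - r₀) * g a₀ r₀‖
      = ‖∫ s in r₀..x.2, (g x.1 s - g a₀ r₀)‖ := by
        rw [intervalIntegral.integral_sub hg_int intervalIntegrable_const,
          intervalIntegral.integral_const, smul_eq_mul]
    _ ≤ ε * |x.2 - r₀| := intervalIntegral.norm_integral_le_of_norm_le_const hclose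
    _ = ε * ‖x.2 - r₀‖ := by rw [Real.norm_eq_abs]

theorem contDiffOn_one_of_hasFDerivAt {𝕜 E F : Type*} [NontriviallyNormedField 𝕜]
    [NormedAddCommGroup E] [NormedSpace 𝕜 E] [NormedAddCommGroup F] [NormedSpace 𝕜 F]
    {f : E → F} {f' : E → E →L[𝕜] F} {U : Set E} (hU : IsOpen U)
    (hf : ∀ x ∈ U, HasFDerivAt f (f' x) x) (hf' : ContinuousOn f' U) : ContDiffOn 𝕜 1 f U := by
  rw [← zero_add 1, contDiffOn_succ_iff_hasFDerivWithinAt_of_uniqueDiffOn hU.uniqueDiffOn]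
  exact ⟨by simp, f', contDiffOn_zero.2 hf', fun x hx => (hf x hx).hasFDerivWithinAt⟩

theorem HasFDerivAt.hasDerivAt_partials {f : ℝ × ℝ → ℝ} {a b : ℝ} {p : ℝ × ℝ}
    (h : HasFDerivAt f (a • fst ℝ ℝ ℝ + b • snd ℝ ℝ ℝ) p) :
    HasDerivAt (fun t => f (t, p.2)) a p.1 ∧ HasDerivAt (fun r => f (p.1, r)) b p.2 :=
  ⟨(h.comp_hasDerivAt p.1 ((hasDerivAt_id p.1).prodMk (hasDerivAt_const p.1 p.2))).congr_deriv
      (by simp),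
    (h.comp_hasDerivAt p.2 ((hasDerivAt_const p.2 p.1).prodMk (hasDerivAt_id p.2))).congr_deriv
      (by simp)⟩

theorem Real.sqrt_sub_sqrt_le {a b : ℝ} (ha : 0 ≤ a) (hb : 0 < b) :
    √a - √b ≤ (a - b) / (2 * √b) := by
  have hsb : 0 < √b := Real.sqrt_pos.2 hb
  rw [le_div_iff₀ (by positivity)]
  nlinarith [sq_nonneg (√a - √b), Real.sq_sqrt ha, Real.sq_sqrt hb.le]

/-- The paper's `Θ₁(λ, t, r)`, with `p = (t, r)`. -/
noncomputable def phase (w q : ℝ → ℝ) (r₁ lam : ℝ) (p : ℝ × ℝ) : ℝ :=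
  (∫ s in r₁..p.2, w s * √(2 * (lam - q s))) - p.1 * lam

noncomputable def travelTime (w q : ℝ → ℝ) (r₁ lam r : ℝ) : ℝ :=
  ∫ s in r₁..r, w s / √(2 * (lam - q s))

/-- The `(t, r)`-gradient of `phase w q r₁ λ` at fixed `λ`. -/
noncomputable def phaseFDeriv (w q : ℝ → ℝ) (lam r : ℝ) : ℝ × ℝ →L[ℝ] ℝ :=
  (-lam) • fst ℝ ℝ ℝ + (w r * √(2 * (lam - q r))) • snd ℝ ℝ ℝ

section

variable {w q : ℝ → ℝ} {r₁ : ℝ}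

theorem continuous_phase_integrand (hw : Continuous w) (hq : Continuous q) :
    Continuous (Function.uncurry fun lam s => w s * √(2 * (lam - q s))) := by
  fun_prop

theorem continuous_travelTime_integrand (hw : Continuous w) (hq : Continuous q) {lam : ℝ}
    (hlam : ∀ s, q s < lam) : Continuous fun s => w s / √(2 * (lam - q s)) :=
  hw.div (by fun_prop) fun s => (Real.sqrt_pos.2 (by linarith [hlam s])).ne'

theorem continuous_travelTime (hw : Continuous w) (hq : Continuous q) {lam : ℝ}
    (hlam : ∀ s, q s < lam) : Continuous (travelTime w q r₁ lam) :=
  intervalIntegral.continuous_primitive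
    (fun _ _ => (continuous_travelTime_integrand hw hq hlam).intervalIntegrable _ _) r₁

theorem travelTime_strictAntiOn (hw : Continuous w) (hq : Continuous q) (hw₀ : ∀ s, 0 < w s)
    {lam₁ : ℝ} (hq₁ : ∀ s, q s ≤ lam₁) {r : ℝ} (hr : r₁ < r) :
    StrictAntiOn (fun lam => travelTime w q r₁ lam r) (Ioi lam₁) := by
  intro a ha b hb hab
  have hlt : ∀ s, w s / √(2 * (b - q s)) < w s / √(2 * (a - q s)) := fun s =>
    div_lt_div_of_pos_left (hw₀ s) (Real.sqrt_pos.2 (by linarith [hq₁ s, mem_Ioi.1 ha]))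
      (Real.sqrt_lt_sqrt (by linarith [hq₁ s, mem_Ioi.1 ha]) (by linarith))
  exact intervalIntegral.integral_lt_integral_of_continuousOn_of_le_of_exists_lt hr
    (continuous_travelTime_integrand hw hq fun s => (hq₁ s).trans_lt hb).continuousOn
    (continuous_travelTime_integrand hw hq fun s => (hq₁ s).trans_lt ha).continuousOn
    (fun s _ => (hlt s).le) ⟨r₁, left_mem_Icc.2 hr.le, hlt r₁⟩

theorem phase_le_phase_of_travelTime_eq (hw : Continuous w) (hq : Continuous q)
    (hw₀ : ∀ s, 0 ≤ w s) {lam μ : ℝ} (hlam : ∀ s, q s ≤ lam) (hμ : ∀ s, q s < μ)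
    {p : ℝ × ℝ} (hr : r₁ ≤ p.2) (hT : travelTime w q r₁ μ p.2 = p.1) :
    phase w q r₁ lam p ≤ phase w q r₁ μ p := by
  have hG := continuous_phase_integrand hw hq
  -- concavity: `√` lies below its tangent line at `2(μ - q s)`
  have htangent : ∀ s, w s * √(2 * (lam - q s)) - w s * √(2 * (μ - q s))
      ≤ (lam - μ) * (w s / √(2 * (μ - q s))) := by
    intro s
    have hb : 0 < 2 * (μ - q s) := by linarith [hμ s]
    have hsb : √(2 * (μ - q s)) ≠ 0 := (Real.sqrt_pos.2 hb).ne'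
    calc _ = w s * (√(2 * (lam - q s)) - √(2 * (μ - q s))) := by ring
      _ ≤ w s * ((2 * (lam - q s) - 2 * (μ - q s)) / (2 * √(2 * (μ - q s)))) :=
        mul_le_mul_of_nonneg_left (Real.sqrt_sub_sqrt_le (by linarith [hlam s]) hb) (hw₀ s)
      _ = _ := by field_simp; ring
  have hmono : (∫ s in r₁..p.2, (w s * √(2 * (lam - q s)) - w s * √(2 * (μ - q s))))
      ≤ ∫ s in r₁..p.2, (lam - μ) * (w s / √(2 * (μ - q s))) :=
    intervalIntegral.integral_mono_on hr
      (((hG.uncurry_left lam).sub (hG.uncurry_left μ)).intervalIntegrable _ _)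
      ((continuous_const.mul (continuous_travelTime_integrand hw hq hμ)).intervalIntegrable _ _)
      fun s _ => htangent s
  rw [intervalIntegral.integral_sub ((hG.uncurry_left lam).intervalIntegrable _ _)
    ((hG.uncurry_left μ).intervalIntegrable _ _), intervalIntegral.integral_const_mul,
    ← travelTime, hT] at hmono
  unfold phase
  linarith [show (lam - μ) * p.1 = p.1 * lam - p.1 * μ by ring]

theorem isLittleO_phase_sub (hw : Continuous w) (hq : Continuous q) (lam₀ : ℝ) (p₀ : ℝ × ℝ) :
    (fun x : ℝ × (ℝ × ℝ) => phase w q r₁ x.1 x.2 - phase w q r₁ x.1 p₀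
      - phaseFDeriv w q lam₀ p₀.2 (x.2 - p₀)) =o[𝓝 (lam₀, p₀)] fun x => x.2 - p₀ := by
  have hG := continuous_phase_integrand hw hq
  have hsplit : ∀ x : ℝ × (ℝ × ℝ), phase w q r₁ x.1 x.2 - phase w q r₁ x.1 p₀
      - phaseFDeriv w q lam₀ p₀.2 (x.2 - p₀)
      = ((∫ s in p₀.2..x.2.2, w s * √(2 * (x.1 - q s)))
          - (x.2.2 - p₀.2) * (w p₀.2 * √(2 * (lam₀ - q p₀.2))))
        - (x.2.1 - p₀.1) * (x.1 - lam₀) := by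
    intro x
    have hdiff := intervalIntegral.integral_interval_sub_left
      ((hG.uncurry_left x.1).intervalIntegrable (μ := volume) r₁ x.2.2)
      ((hG.uncurry_left x.1).intervalIntegrable r₁ p₀.2)
    simp only [phase, phaseFDeriv, add_apply, smul_apply, coe_fst', coe_snd', Prod.fst_sub,
      Prod.snd_sub, smul_eq_mul] at hdiff ⊢
    rw [← hdiff]
    ring
  simp_rw [hsplit]
  refine IsLittleO.sub ?_ ?_
  · have hsnd : (fun x : ℝ × (ℝ × ℝ) => x.2.2 - p₀.2) =O[𝓝 (lam₀, p₀)] fun x => x.2 - p₀ :=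
      isBigO_of_le _ fun x => norm_snd_le (x.2 - p₀)
    exact ((isLittleO_integral_sub_mul hG lam₀ p₀.2).comp_tendsto
      ((continuous_fst.prodMk (continuous_snd.comp continuous_snd)).tendsto' _ _ rfl)).trans_isBigO
      hsnd
  · have hfst : (fun x : ℝ × (ℝ × ℝ) => x.2.1 - p₀.1) =O[𝓝 (lam₀, p₀)] fun x => ‖x.2 - p₀‖ :=
      isBigO_of_le _ fun x => (norm_fst_le (x.2 - p₀)).trans (le_abs_self _)
    have hlam : (fun x : ℝ × (ℝ × ℝ) => x.1 - lam₀) =o[𝓝 (lam₀, p₀)] fun _ => (1 : ℝ) :=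
      (isLittleO_one_iff ℝ).2
        ((by fun_prop : Continuous fun x : ℝ × (ℝ × ℝ) => x.1 - lam₀).tendsto' _ _ (sub_self _))
    have hnorm : (fun x : ℝ × (ℝ × ℝ) => ‖x.2 - p₀‖ * 1) =O[𝓝 (lam₀, p₀)] fun x => x.2 - p₀ :=
      isBigO_of_le _ fun x => by simp
    simpa using (hfst.mul_isLittleO hlam).trans_isBigO hnorm

theorem continuous_phaseFDeriv (hw : Continuous w) (hq : Continuous q) :
    Continuous fun x : ℝ × ℝ => phaseFDeriv w q x.1 x.2 := by
  unfold phaseFDeriv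
  fun_prop

theorem isOpen_setOf_lt_travelTime (hw : Continuous w) (hq : Continuous q) {lam₁ : ℝ}
    (hq₁ : ∀ s, q s < lam₁) :
    IsOpen {p : ℝ × ℝ | 0 < p.1 ∧ r₁ < p.2 ∧ p.1 < travelTime w q r₁ lam₁ p.2} :=
  (isOpen_lt continuous_const continuous_fst).inter ((isOpen_lt continuous_const
    continuous_snd).inter (isOpen_lt continuous_fst
      ((continuous_travelTime hw hq hq₁).comp continuous_snd)))

theorem continuousOn_of_travelTime_eq (hw : Continuous w) (hq : Continuous q)
    (hw₀ : ∀ s, 0 < w s) {lam₁ : ℝ} (hq₁ : ∀ s, q s ≤ lam₁) {U : Set (ℝ × ℝ)} (hU : IsOpen U)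
    {μ : ℝ × ℝ → ℝ} (hμ : ∀ p ∈ U, r₁ < p.2 ∧ lam₁ < μ p ∧ travelTime w q r₁ (μ p) p.2 = p.1) :
    ContinuousOn μ U := by
  intro p hp
  refine ContinuousAt.continuousWithinAt <| continuousAt_of_strictAntiOn_of_apply_eq
    (F := fun lam x => travelTime w q r₁ lam x.2) (h := Prod.fst) (s := Ioi lam₁)
    (Ioi_mem_nhds (hμ p hp).2.1) (fun a ha => ?_) ?_
  · exact (((continuous_travelTime hw hq fun s => (hq₁ s).trans_lt ha).comp
      continuous_snd).sub continuous_fst).continuousAt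
  · filter_upwards [hU.mem_nhds hp] with x hx
    obtain ⟨hr, hlam, hT⟩ := hμ x hx
    exact ⟨travelTime_strictAntiOn hw hq hw₀ hq₁ hr, hlam, hT⟩

theorem hasFDerivAt_phase_of_travelTime_eq (hw : Continuous w) (hq : Continuous q)
    (hw₀ : ∀ s, 0 < w s) {lam₁ : ℝ} (hq₁ : ∀ s, q s ≤ lam₁) {U : Set (ℝ × ℝ)} (hU : IsOpen U)
    {μ : ℝ × ℝ → ℝ} (hμ : ∀ p ∈ U, r₁ < p.2 ∧ lam₁ < μ p ∧ travelTime w q r₁ (μ p) p.2 = p.1)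
    {p₀ : ℝ × ℝ} (hp₀ : p₀ ∈ U) :
    HasFDerivAt (fun p => phase w q r₁ (μ p) p) (phaseFDeriv w q (μ p₀) p₀.2) p₀ := by
  have hmax : ∀ p ∈ U, ∀ lam, lam₁ ≤ lam → phase w q r₁ lam p ≤ phase w q r₁ (μ p) p := by
    intro p hp lam hlam
    obtain ⟨hr, hμp, hT⟩ := hμ p hp
    exact phase_le_phase_of_travelTime_eq hw hq (fun s => (hw₀ s).le)
      (fun s => (hq₁ s).trans hlam) (fun s => (hq₁ s).trans_lt hμp) hr.le hT
  refine hasFDerivAt_envelope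
    ((continuousOn_of_travelTime_eq hw hq hw₀ hq₁ hU hμ).continuousAt (hU.mem_nhds hp₀))
    ?_ ?_ (isLittleO_phase_sub hw hq _ _)
  · filter_upwards [hU.mem_nhds hp₀] with p hp
    exact hmax p hp _ (hμ p₀ hp₀).2.1.le
  · filter_upwards [hU.mem_nhds hp₀] with p hp
    exact hmax p₀ hp₀ _ (hμ p hp).2.1.le

theorem contDiffOn_phase_of_travelTime_eq (hw : Continuous w) (hq : Continuous q)
    (hw₀ : ∀ s, 0 < w s) {lam₁ : ℝ} (hq₁ : ∀ s, q s ≤ lam₁) {U : Set (ℝ × ℝ)} (hU : IsOpen U)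
    {μ : ℝ × ℝ → ℝ} (hμ : ∀ p ∈ U, r₁ < p.2 ∧ lam₁ < μ p ∧ travelTime w q r₁ (μ p) p.2 = p.1) :
    ContDiffOn ℝ 1 (fun p => phase w q r₁ (μ p) p) U :=
  contDiffOn_one_of_hasFDerivAt hU
    (fun _ => hasFDerivAt_phase_of_travelTime_eq hw hq hw₀ hq₁ hU hμ)
    ((continuous_phaseFDeriv hw hq).comp_continuousOn
      ((continuousOn_of_travelTime_eq hw hq hw₀ hq₁ hU hμ).prodMk continuousOn_snd))

end

theorem phase_K1_derivatives_and_HamiltonJacobi_general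
    (lam0 lam1 r1 c1 : ℝ)
    (hlam : lam0 < lam1) (hc1 : 0 < c1)
    (w q : ℝ → ℝ)
    (hw : ContinuousOn w (Set.Ici r1))
    (hwl : ∀ s, r1 ≤ s → c1 ≤ w s)
    (hq : ContinuousOn q (Set.Ici r1))
    (hqu : ∀ s, r1 ≤ s → q s ≤ (lam0 + lam1) / 2)
    (T : ℝ → ℝ → ℝ)
    (hT : ∀ lam r, T lam r = ∫ s in r1..r, w s / Real.sqrt (2 * (lam - q s)))
    (Ωc : Set (ℝ × ℝ))
    (hΩc : Ωc = {p : ℝ × ℝ | 0 < p.1 ∧ r1 < p.2 ∧ p.1 < T lam1 p.2})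
    (lamc : ℝ → ℝ → ℝ)
    (hlamc : ∀ p ∈ Ωc, lam1 < lamc p.1 p.2 ∧ T (lamc p.1 p.2) p.2 = p.1)
    (K1 : ℝ → ℝ → ℝ)
    (hK1 : ∀ t r, K1 t r
      = (∫ s in r1..r, w s * Real.sqrt (2 * (lamc t r - q s))) - t * lamc t r) :
    ContDiffOn ℝ 1 (fun p : ℝ × ℝ => K1 p.1 p.2) Ωc ∧
    ∀ p ∈ Ωc,
      HasDerivAt (fun t => K1 t p.2) (-(lamc p.1 p.2)) p.1 ∧
      HasDerivAt (fun r => K1 p.1 r)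
        (w p.2 * Real.sqrt (2 * (lamc p.1 p.2 - q p.2))) p.2 ∧
      -(lamc p.1 p.2)
        + (1 / 2) * ((w p.2)⁻¹ * (w p.2 * Real.sqrt (2 * (lamc p.1 p.2 - q p.2)))) ^ 2
        + q p.2 = 0 := by
  -- only the values on `[r1, ∞)` enter, so extend `w` and `q` to continuous functions on `ℝ`
  set w' : ℝ → ℝ := fun s => w (max s r1)
  set q' : ℝ → ℝ := fun s => q (max s r1)
  have hw' : Continuous w' := hw.comp_max_const
  have hq' : Continuous q' := hq.comp_max_const
  have hw'₀ : ∀ s, 0 < w' s := fun s => hc1.trans_le (hwl _ (le_max_right s r1))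
  have hq'₁ : ∀ s, q' s < lam1 := fun s => (hqu _ (le_max_right s r1)).trans_lt (by linarith)
  have hT' : ∀ lam r, r1 ≤ r → T lam r = travelTime w' q' r1 lam r := fun lam r hr => by
    rw [hT]
    exact (intervalIntegral.integral_comp_max_const (fun s => w s / √(2 * (lam - q s))) hr).symm
  have hΩc' : Ωc = {p : ℝ × ℝ | 0 < p.1 ∧ r1 < p.2 ∧ p.1 < travelTime w' q' r1 lam1 p.2} := by
    rw [hΩc]
    ext p
    exact and_congr_right fun _ => and_congr_right fun hr => by rw [hT' _ _ hr.le]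
  have hU : IsOpen Ωc := hΩc' ▸ isOpen_setOf_lt_travelTime hw' hq' hq'₁
  have hstat : ∀ p ∈ Ωc, r1 < p.2 ∧ lam1 < lamc p.1 p.2 ∧
      travelTime w' q' r1 (lamc p.1 p.2) p.2 = p.1 := fun p hp => by
    have hr : r1 < p.2 := (hΩc' ▸ hp).2.1
    exact ⟨hr, (hlamc p hp).1, by rw [← hT' _ _ hr.le, (hlamc p hp).2]⟩
  have hK' : ∀ p ∈ Ωc, K1 p.1 p.2 = phase w' q' r1 (lamc p.1 p.2) p := fun p hp => by
    rw [hK1]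
    exact congrArg (· - p.1 * lamc p.1 p.2) (intervalIntegral.integral_comp_max_const
      (fun s => w s * √(2 * (lamc p.1 p.2 - q s))) (hstat p hp).1.le).symm
  have hq'₁' : ∀ s, q' s ≤ lam1 := fun s => (hq'₁ s).le
  refine ⟨(contDiffOn_phase_of_travelTime_eq hw' hq' hw'₀ hq'₁' hU hstat).congr hK',
    fun p hp => ?_⟩
  have hr : r1 ≤ p.2 := (hstat p hp).1.le
  obtain ⟨ht, hr'⟩ := ((hasFDerivAt_phase_of_travelTime_eq hw' hq' hw'₀ hq'₁' hU hstat
    hp).congr_of_eventuallyEq (eventually_of_mem (hU.mem_nhds hp) hK')).hasDerivAt_partials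
  simp only [w', q', max_eq_left hr] at hr'
  refine ⟨ht, hr', ?_⟩
  rw [inv_mul_cancel_left₀ (hc1.trans_le (hwl _ hr)).ne',
    Real.sq_sqrt (by linarith [hqu _ hr, (hstat p hp).2.1])]
  ring

/-- The phase `K₁(t,r) = ∫_{r₁}^r w(s)√(2(λ_c(t,r)−q(s))) ds − t·λ_c(t,r)`
is `C¹` on `Ω_c` with `∂_tK₁ = −λ_c` and `∂_rK₁ = w(r)√(2(λ_c−q(r)))`; consequently
`K₁` solves the Hamilton–Jacobi equation `∂_tK₁ + ½(w(r)⁻¹∂_rK₁)² + q(r) = 0` on `Ω_c`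
(identities (3.9), (3.10) of the paper's Lemma 3.1). -/
theorem phase_K1_derivatives_and_HamiltonJacobi
    (lam0 lam1 r1 c1 c2 m : ℝ)
    (hlam : lam0 < lam1) (hr1 : 1 ≤ r1) (hc1 : 0 < c1) (hc12 : c1 ≤ c2)
    (hm : m ≤ (lam0 + lam1) / 2)
    (w q : ℝ → ℝ)
    (hw : ContinuousOn w (Set.Ici r1))
    (hwl : ∀ s, r1 ≤ s → c1 ≤ w s) (hwu : ∀ s, r1 ≤ s → w s ≤ c2)
    (hq : ContinuousOn q (Set.Ici r1))
    (hql : ∀ s, r1 ≤ s → m ≤ q s) (hqu : ∀ s, r1 ≤ s → q s ≤ (lam0 + lam1) / 2)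
    (T : ℝ → ℝ → ℝ)
    (hT : ∀ lam r, T lam r = ∫ s in r1..r, w s / Real.sqrt (2 * (lam - q s)))
    (Ωc : Set (ℝ × ℝ))
    (hΩc : Ωc = {p : ℝ × ℝ | 0 < p.1 ∧ r1 < p.2 ∧ p.1 < T lam1 p.2})
    (lamc : ℝ → ℝ → ℝ)
    (hlamc : ∀ p ∈ Ωc, lam1 < lamc p.1 p.2 ∧ T (lamc p.1 p.2) p.2 = p.1)
    (K1 : ℝ → ℝ → ℝ)
    (hK1 : ∀ t r, K1 t r
      = (∫ s in r1..r, w s * Real.sqrt (2 * (lamc t r - q s))) - t * lamc t r) :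
    ContDiffOn ℝ 1 (fun p : ℝ × ℝ => K1 p.1 p.2) Ωc ∧
    ∀ p ∈ Ωc,
      HasDerivAt (fun t => K1 t p.2) (-(lamc p.1 p.2)) p.1 ∧
      HasDerivAt (fun r => K1 p.1 r)
        (w p.2 * Real.sqrt (2 * (lamc p.1 p.2 - q p.2))) p.2 ∧
      -(lamc p.1 p.2)
        + (1 / 2) * ((w p.2)⁻¹ * (w p.2 * Real.sqrt (2 * (lamc p.1 p.2 - q p.2)))) ^ 2
        + q p.2 = 0 :=
  phase_K1_derivatives_and_HamiltonJacobi_general lam0 lam1 r1 c1 hlam hc1 w q hw hwl hq hqu T hT Ωc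
    hΩc lamc hlamc K1 hK1
end

section
/- For each fixed t > 0 there exists r_c(t) ∈ (r₁, ∞) such that {r > r₁ : (t,r) ∈ Ω_c} = (r_c(t), ∞); the map r ↦ λ_c(t,r) is strictly increasing and continuous on (r_c(t), ∞), λ_c(t,r) → λ₁ as r ↘ r_c(t), and λ_c(t,r) → ∞ as r → ∞; in particular λ_c(t,·) is a bijection from (r_c(t),∞) onto (λ₁,∞). (This is Step I of the proof of the paper's Lemma 3.3.) -/
open MeasureTheory

/-- (Step I of the proof of the paper's Lemma 3.3.) For each fixed
`t > 0` there is `r_c(t) ∈ (r₁,∞)` with `{r : (t,r) ∈ Ω_c} = (r_c(t),∞)`; the map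
`r ↦ λ_c(t,r)` is strictly increasing and continuous on `(r_c(t),∞)`, tends to `λ₁`
as `r ↘ r_c(t)` and to `∞` as `r → ∞`; in particular it is a bijection from
`(r_c(t),∞)` onto `(λ₁,∞)`. -/
theorem stationary_point_radial_bijection
    (lam0 lam1 r1 c1 c2 m : ℝ)
    (hlam : lam0 < lam1) (hr1 : 1 ≤ r1) (hc1 : 0 < c1) (hc12 : c1 ≤ c2)
    (hm : m ≤ (lam0 + lam1) / 2)
    (w q : ℝ → ℝ)
    (hw : ContinuousOn w (Set.Ici r1))
    (hwl : ∀ s, r1 ≤ s → c1 ≤ w s) (hwu : ∀ s, r1 ≤ s → w s ≤ c2)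
    (hq : ContinuousOn q (Set.Ici r1))
    (hql : ∀ s, r1 ≤ s → m ≤ q s) (hqu : ∀ s, r1 ≤ s → q s ≤ (lam0 + lam1) / 2)
    (T : ℝ → ℝ → ℝ)
    (hT : ∀ lam r, T lam r = ∫ s in r1..r, w s / Real.sqrt (2 * (lam - q s)))
    (Ωc : Set (ℝ × ℝ))
    (hΩc : Ωc = {p : ℝ × ℝ | 0 < p.1 ∧ r1 < p.2 ∧ p.1 < T lam1 p.2})
    (lamc : ℝ → ℝ → ℝ)
    (hlamc : ∀ p ∈ Ωc, lam1 < lamc p.1 p.2 ∧ T (lamc p.1 p.2) p.2 = p.1) :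
    ∀ t : ℝ, 0 < t → ∃ rc : ℝ, r1 < rc ∧
      {r : ℝ | (t, r) ∈ Ωc} = Set.Ioi rc ∧
      StrictMonoOn (fun r => lamc t r) (Set.Ioi rc) ∧
      ContinuousOn (fun r => lamc t r) (Set.Ioi rc) ∧
      Filter.Tendsto (fun r => lamc t r) (nhdsWithin rc (Set.Ioi rc)) (nhds lam1) ∧
      Filter.Tendsto (fun r => lamc t r) Filter.atTop Filter.atTop ∧
      Set.BijOn (fun r => lamc t r) (Set.Ioi rc) (Set.Ioi lam1) := by
  intro t ht
  have hgap : 0 < lam1 - lam0 := by linarith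
  set G : ℝ → ℝ → ℝ := fun lam s => w s / Real.sqrt (2 * (lam - q s)) with hGdef
  have hT' : ∀ lam r, T lam r = ∫ s in r1..r, G lam s := hT
  have hden : ∀ lam, lam1 ≤ lam → ∀ s, r1 ≤ s → 0 < 2 * (lam - q s) := by
    intro lam hl s hs; have := hqu s hs; nlinarith
  have hlm : ∀ lam, lam1 ≤ lam → 0 < 2 * (lam - m) := by
    intro lam hl; nlinarith
  have hwpos : ∀ s, r1 ≤ s → 0 < w s := fun s hs => lt_of_lt_of_le hc1 (hwl s hs)
  -- pointwise bounds
  have hGpos : ∀ lam, lam1 ≤ lam → ∀ s, r1 ≤ s → 0 < G lam s := by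
    intro lam hl s hs
    exact div_pos (hwpos s hs) (Real.sqrt_pos.2 (hden lam hl s hs))
  have hub : ∀ lam, lam1 ≤ lam → ∀ s, r1 ≤ s →
      G lam s ≤ c2 / Real.sqrt (lam1 - lam0) := by
    intro lam hl s hs
    have h1 : lam1 - lam0 ≤ 2 * (lam - q s) := by have := hqu s hs; nlinarith
    exact div_le_div₀ (by linarith) (hwu s hs) (Real.sqrt_pos.2 hgap)
      (Real.sqrt_le_sqrt h1)
  have hlb : ∀ lam, lam1 ≤ lam → ∀ s, r1 ≤ s →
      c1 / Real.sqrt (2 * (lam - m)) ≤ G lam s := by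
    intro lam hl s hs
    have h1 : 2 * (lam - q s) ≤ 2 * (lam - m) := by have := hql s hs; nlinarith
    exact div_le_div₀ (le_of_lt (hwpos s hs)) (hwl s hs)
      (Real.sqrt_pos.2 (hden lam hl s hs)) (Real.sqrt_le_sqrt h1)
  -- continuity and integrability of the integrand
  have hGcont : ∀ lam, lam1 ≤ lam → ContinuousOn (G lam) (Set.Ici r1) := by
    intro lam hl
    apply hw.div
    · exact Real.continuous_sqrt.comp_continuousOn
        (continuousOn_const.mul (continuousOn_const.sub hq))
    · intro s hs
      exact ne_of_gt (Real.sqrt_pos.2 (hden lam hl s hs))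
  have hGint : ∀ lam, lam1 ≤ lam → ∀ a b, r1 ≤ a → r1 ≤ b →
      IntervalIntegrable (G lam) volume a b := by
    intro lam hl a b ha hb
    apply ContinuousOn.intervalIntegrable
    exact (hGcont lam hl).mono fun x hx => le_trans (le_min ha hb) hx.1
  -- additivity
  have hTadd : ∀ lam, lam1 ≤ lam → ∀ a b, r1 ≤ a → r1 ≤ b →
      T lam b = T lam a + ∫ s in a..b, G lam s := by
    intro lam hl a b ha hb
    rw [hT', hT']
    exact (intervalIntegral.integral_add_adjacent_intervals
      (hGint lam hl r1 a le_rfl ha) (hGint lam hl a b ha hb)).symm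
  -- two-sided bounds on increments
  have hTdiff : ∀ lam, lam1 ≤ lam → ∀ a b, r1 ≤ a → a ≤ b →
      c1 / Real.sqrt (2 * (lam - m)) * (b - a) ≤ T lam b - T lam a ∧
      T lam b - T lam a ≤ c2 / Real.sqrt (lam1 - lam0) * (b - a) := by
    intro lam hl a b ha hab
    have hb : r1 ≤ b := le_trans ha hab
    have hEq : T lam b - T lam a = ∫ s in a..b, G lam s := by
      rw [hTadd lam hl a b ha hb]; ring
    constructor
    · rw [hEq]
      calc c1 / Real.sqrt (2 * (lam - m)) * (b - a)
          = ∫ _ in a..b, c1 / Real.sqrt (2 * (lam - m)) := by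
            rw [intervalIntegral.integral_const]; simp [mul_comm]
        _ ≤ ∫ s in a..b, G lam s := by
            apply intervalIntegral.integral_mono_on hab
              (intervalIntegrable_const) (hGint lam hl a b ha hb)
            intro x hx; exact hlb lam hl x (le_trans ha hx.1)
    · rw [hEq]
      calc (∫ s in a..b, G lam s)
          ≤ ∫ _ in a..b, c2 / Real.sqrt (lam1 - lam0) := by
            apply intervalIntegral.integral_mono_on hab
              (hGint lam hl a b ha hb) (intervalIntegrable_const)
            intro x hx; exact hub lam hl x (le_trans ha hx.1)
        _ = c2 / Real.sqrt (lam1 - lam0) * (b - a) := by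
            rw [intervalIntegral.integral_const]; simp [mul_comm]
  have hTr1 : ∀ lam, T lam r1 = 0 := by
    intro lam; rw [hT]; exact intervalIntegral.integral_same
  -- strict monotonicity in r
  have hTsm : ∀ lam, lam1 ≤ lam → ∀ a b, r1 ≤ a → a < b → T lam a < T lam b := by
    intro lam hl a b ha hab
    have h := (hTdiff lam hl a b ha hab.le).1
    have hK : 0 < c1 / Real.sqrt (2 * (lam - m)) :=
      div_pos hc1 (Real.sqrt_pos.2 (hlm lam hl))
    nlinarith
  have hTle : ∀ lam, lam1 ≤ lam → ∀ a b, r1 ≤ a → a ≤ b → T lam a ≤ T lam b := by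
    intro lam hl a b ha hab
    rcases eq_or_lt_of_le hab with rfl | h
    · exact le_rfl
    · exact (hTsm lam hl a b ha h).le
  -- continuity in r (Lipschitz)
  have hTcont : ∀ lam, lam1 ≤ lam → ContinuousOn (T lam) (Set.Ici r1) := by
    intro lam hl
    set K : ℝ := c2 / Real.sqrt (lam1 - lam0) with hK
    have hK0 : 0 ≤ K := div_nonneg (by linarith) (Real.sqrt_nonneg _)
    have key : ∀ a ∈ Set.Ici r1, ∀ b ∈ Set.Ici r1,
        dist (T lam a) (T lam b) ≤ K * dist a b := by
      have main : ∀ a b, r1 ≤ a → a ≤ b →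
          dist (T lam a) (T lam b) ≤ K * dist a b := by
        intro a b ha hab
        have h := hTdiff lam hl a b ha hab
        have h0 : 0 ≤ T lam b - T lam a :=
          le_trans (mul_nonneg (div_nonneg hc1.le (Real.sqrt_nonneg _))
            (sub_nonneg.2 hab)) h.1
        rw [Real.dist_eq, Real.dist_eq, abs_sub_comm (T lam a),
          abs_of_nonneg h0, abs_sub_comm a, abs_of_nonneg (sub_nonneg.2 hab)]
        exact h.2
      intro a ha b hb
      rcases le_total a b with hab | hab
      · exact main a b ha hab
      · rw [dist_comm (T lam a), dist_comm a]; exact main b a hb hab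
    have : LipschitzOnWith K.toNNReal (T lam) (Set.Ici r1) := by
      rw [lipschitzOnWith_iff_dist_le_mul]
      intro a ha b hb
      rw [Real.coe_toNNReal K hK0]
      exact key a ha b hb
    exact this.continuousOn
  -- strict antitonicity in lam
  have hanti : ∀ r, r1 < r → ∀ lam lam', lam1 ≤ lam → lam < lam' →
      T lam' r < T lam r := by
    intro r hr lam lam' hl hll
    have hl' : lam1 ≤ lam' := le_trans hl hll.le
    have hpt : ∀ s, r1 ≤ s → G lam' s < G lam s := by
      intro s hs
      have h1 : 2 * (lam - q s) < 2 * (lam' - q s) := by nlinarith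
      have h2 : Real.sqrt (2 * (lam - q s)) < Real.sqrt (2 * (lam' - q s)) :=
        Real.sqrt_lt_sqrt (hden lam hl s hs).le h1
      exact div_lt_div_of_pos_left (hwpos s hs)
        (Real.sqrt_pos.2 (hden lam hl s hs)) h2
    have hint : 0 < ∫ s in r1..r, (G lam s - G lam' s) := by
      apply intervalIntegral.intervalIntegral_pos_of_pos_on
        ((hGint lam hl r1 r le_rfl hr.le).sub (hGint lam' hl' r1 r le_rfl hr.le))
        (fun x hx => sub_pos.2 (hpt x hx.1.le)) hr
    have hsub : (∫ s in r1..r, (G lam s - G lam' s))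
        = (∫ s in r1..r, G lam s) - ∫ s in r1..r, G lam' s :=
      intervalIntegral.integral_sub (hGint lam hl r1 r le_rfl hr.le)
        (hGint lam' hl' r1 r le_rfl hr.le)
    rw [hT' lam, hT' lam']
    rw [hsub] at hint; linarith
  -- existence of solutions via IVT
  have hexists : ∀ lam, lam1 ≤ lam → ∃ r, r1 < r ∧ T lam r = t := by
    intro lam hl
    have hK : 0 < c1 / Real.sqrt (2 * (lam - m)) :=
      div_pos hc1 (Real.sqrt_pos.2 (hlm lam hl))
    obtain ⟨R, hRdef⟩ : ∃ R : ℝ,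
        R = r1 + (t + 1) / (c1 / Real.sqrt (2 * (lam - m))) := ⟨_, rfl⟩
    have hR : r1 ≤ R := by
      rw [hRdef]
      have := div_pos (show (0:ℝ) < t + 1 by linarith) hK
      linarith
    have hTR : t ≤ T lam R := by
      have h := (hTdiff lam hl r1 R le_rfl hR).1
      rw [hTr1 lam] at h
      have hmul : c1 / Real.sqrt (2 * (lam - m)) * (R - r1) = t + 1 := by
        rw [hRdef, add_sub_cancel_left, mul_div_cancel₀ _ (ne_of_gt hK)]
      linarith
    have hIVT := intermediate_value_Icc hR ((hTcont lam hl).mono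
      (fun x hx => hx.1))
    have : t ∈ Set.Icc (T lam r1) (T lam R) := by
      rw [hTr1 lam]; exact ⟨ht.le, hTR⟩
    obtain ⟨r, hrmem, hrT⟩ := hIVT this
    refine ⟨r, lt_of_le_of_ne hrmem.1 ?_, hrT⟩
    rintro rfl
    rw [hTr1 lam] at hrT; linarith
  -- the critical radius
  obtain ⟨rc, hrc1, hrct⟩ := hexists lam1 le_rfl
  -- set equality
  have hset : {r : ℝ | (t, r) ∈ Ωc} = Set.Ioi rc := by
    ext r
    simp only [hΩc, Set.mem_setOf_eq, Set.mem_Ioi]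
    constructor
    · rintro ⟨-, hr1r, htr⟩
      by_contra hcon
      push_neg at hcon
      have := hTle lam1 le_rfl r rc hr1r.le hcon
      linarith
    · intro hr
      exact ⟨ht, lt_trans hrc1 hr, by
        rw [← hrct]; exact hTsm lam1 le_rfl rc r hrc1.le hr⟩
  have hmem : ∀ r, rc < r → lam1 < lamc t r ∧ T (lamc t r) r = t := by
    intro r hr
    have : (t, r) ∈ Ωc := by
      have : r ∈ {r : ℝ | (t, r) ∈ Ωc} := by rw [hset]; exact hr
      exact this
    exact hlamc (t, r) this
  -- uniqueness of the stationary value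
  have huniq : ∀ r, rc < r → ∀ lam, lam1 < lam → T lam r = t → lamc t r = lam := by
    intro r hr lam hl hTr
    obtain ⟨h1, h2⟩ := hmem r hr
    have hr1r : r1 < r := lt_trans hrc1 hr
    rcases lt_trichotomy (lamc t r) lam with h | h | h
    · have := hanti r hr1r (lamc t r) lam h1.le h
      rw [h2, hTr] at this; linarith
    · exact h
    · have := hanti r hr1r lam (lamc t r) hl.le h
      rw [h2, hTr] at this; linarith
  -- surjectivity
  have hsurj : ∀ lam, lam1 < lam → ∃ r, rc < r ∧ lamc t r = lam := by
    intro lam hl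
    obtain ⟨r, hr1r, hTr⟩ := hexists lam hl.le
    have hrcr : rc < r := by
      by_contra hcon
      push_neg at hcon
      have h1 : T lam1 r ≤ T lam1 rc := hTle lam1 le_rfl r rc hr1r.le hcon
      have h2 : T lam r < T lam1 r := hanti r hr1r lam1 lam le_rfl hl
      rw [hTr, hrct] at *
      linarith
    exact ⟨r, hrcr, huniq r hrcr lam hl hTr⟩
  -- strict monotonicity of lamc
  have hsm : StrictMonoOn (fun r => lamc t r) (Set.Ioi rc) := by
    intro a ha b hb hab
    simp only [Set.mem_Ioi] at ha hb
    obtain ⟨ha1, ha2⟩ := hmem a ha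
    obtain ⟨hb1, hb2⟩ := hmem b hb
    have hr1a : r1 < a := lt_trans hrc1 ha
    by_contra hcon
    push_neg at hcon
    have hsmall : T (lamc t b) a < t := by
      have h3 := hTsm (lamc t b) hb1.le a b hr1a.le hab
      rw [hb2] at h3
      exact h3
    rcases eq_or_lt_of_le hcon with heq | hlt
    · rw [← heq] at ha2; linarith
    · have := hanti a hr1a (lamc t b) (lamc t a) hb1.le hlt
      rw [ha2] at this; linarith
  -- bijectivity
  have hbij : Set.BijOn (fun r => lamc t r) (Set.Ioi rc) (Set.Ioi lam1) := by
    refine ⟨fun r hr => (hmem r hr).1, hsm.injOn, ?_⟩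
    intro lam hl
    obtain ⟨r, hr, he⟩ := hsurj lam hl
    exact ⟨r, hr, he⟩
  -- continuity of lamc
  have hcont : ContinuousOn (fun r => lamc t r) (Set.Ioi rc) := by
    intro a ha
    apply ContinuousAt.continuousWithinAt
    apply hsm.continuousAt_of_image_mem_nhds (isOpen_Ioi.mem_nhds ha)
    rw [hbij.image_eq]
    exact isOpen_Ioi.mem_nhds ((hmem a ha).1)
  -- limit at rc from the right
  have hlim1 : Filter.Tendsto (fun r => lamc t r) (nhdsWithin rc (Set.Ioi rc))
      (nhds lam1) := by
    rw [tendsto_order]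
    constructor
    · intro b hb
      exact Filter.eventually_of_mem self_mem_nhdsWithin
        (fun r hr => lt_trans hb (hmem r hr).1)
    · intro b hb
      obtain ⟨rb, hrb, hrbe⟩ := hsurj b hb
      apply Filter.eventually_of_mem (Ioo_mem_nhdsGT_of_mem ⟨le_rfl, hrb⟩)
      intro r hr
      have h : lamc t r < lamc t rb :=
        hsm (Set.mem_Ioi.2 hr.1) (Set.mem_Ioi.2 hrb) hr.2
      exact lt_of_lt_of_eq h hrbe
  -- limit at infinity
  have hlim2 : Filter.Tendsto (fun r => lamc t r) Filter.atTop Filter.atTop := by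
    rw [Filter.tendsto_atTop]
    intro M
    obtain ⟨rM, hrM, he⟩ := hsurj (max M lam1 + 1)
      (lt_of_le_of_lt (le_max_right M lam1) (by linarith))
    filter_upwards [Filter.eventually_gt_atTop rM] with r hr
    have h : lamc t rM < lamc t r :=
      hsm (Set.mem_Ioi.2 hrM) (Set.mem_Ioi.2 (lt_trans hrM hr)) hr
    rw [he] at h
    have hM : M ≤ max M lam1 := le_max_left M lam1
    show M ≤ lamc t r
    linarith
  exact ⟨rc, hrc1, hset, hsm, hcont, hlim1, hlim2, hbij⟩
end

section
/- There exist R₀ ≥ r₀ and C′ > 0 such that for every λ ≥ λ₀ + δ and every R ≥ R₀ one has ∫_R^∞ |√(2(λ−q(s))) − b_do(λ,s)| ds ≤ C′·R^{−ε}. (This is the quantitative form of the Dollard-type tail estimate (2.6) of the paper, showing that the integral tends to 0 as R → ∞ locally uniformly in λ.) -/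
open MeasureTheory

lemma dollard_sqrt_taylor (a x : ℝ) (ha : 0 < a) (hax : 0 ≤ a - x) :
    |Real.sqrt (a - x) - (Real.sqrt a - (x / 2) / Real.sqrt a)|
      ≤ x ^ 2 / (2 * Real.sqrt a ^ 3) := by
  set u := Real.sqrt (a - x) with hu_def
  set v := Real.sqrt a with hv_def
  have hv : 0 < v := Real.sqrt_pos.2 ha
  have hu : 0 ≤ u := Real.sqrt_nonneg _
  have hu2 : u ^ 2 = a - x := Real.sq_sqrt hax
  have hv2 : v ^ 2 = a := Real.sq_sqrt ha.le
  have hx : x = v ^ 2 - u ^ 2 := by rw [hu2, hv2]; ring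
  have huv : 0 < u + v := by linarith
  have hident : u - (v - (x / 2) / v) = -(x ^ 2) / (2 * v * (u + v) ^ 2) := by
    rw [hx]
    field_simp
    ring
  rw [hident, abs_div, abs_neg, abs_of_nonneg (sq_nonneg x),
    abs_of_pos (by positivity : (0:ℝ) < 2 * v * (u + v) ^ 2)]
  apply div_le_div_of_nonneg_left (sq_nonneg x) (by positivity)
  nlinarith [sq_nonneg u, mul_pos hv hv]

/-- Quantitative form of the Dollard-type tail estimate (2.6):
under the Dollard condition `|q(s) − λ₀| ≤ C·s^{−(1+ε)/2}` there are `R₀ ≥ r₀` and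
`C′ > 0` such that for every `λ ≥ λ₀ + δ` and `R ≥ R₀`,
`∫_R^∞ |√(2(λ−q(s))) − b_do(λ,s)| ds ≤ C′·R^{−ε}`, where
`b_do(λ,s) = √(2(λ−λ₀)) − (q(s)−λ₀)/√(2(λ−λ₀))`. -/
theorem dollard_tail_estimate
    (lam0 r0 C ε δ : ℝ)
    (hr0 : 1 ≤ r0) (hC : 0 < C) (hε : 0 < ε) (hε1 : ε < 1) (hδ : 0 < δ)
    (q : ℝ → ℝ) (hq : Measurable q)
    (hqb : ∀ s, r0 ≤ s → |q s - lam0| ≤ C * s ^ (-(1 + ε) / 2)) :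
    ∃ R0 : ℝ, r0 ≤ R0 ∧ ∃ C' > 0, ∀ lam : ℝ, lam0 + δ ≤ lam → ∀ R : ℝ, R0 ≤ R →
      (∫ s in Set.Ioi R,
        |Real.sqrt (2 * (lam - q s))
          - (Real.sqrt (2 * (lam - lam0))
              - (q s - lam0) / Real.sqrt (2 * (lam - lam0)))|)
      ≤ C' * R ^ (-ε) := by
  set K : ℝ := 2 * C ^ 2 / Real.sqrt (2 * δ) ^ 3 with hK_def
  have hKpos : 0 < K := by
    have : 0 < Real.sqrt (2 * δ) := Real.sqrt_pos.2 (by linarith)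
    positivity
  refine ⟨max r0 (max 1 ((2 * C / δ) ^ 2)), le_max_left _ _, K / ε, by positivity,
    fun lam hlam R hR => ?_⟩
  have hR1 : (1:ℝ) ≤ R := le_trans (le_trans (le_max_left _ _) (le_max_right _ _)) hR
  have hRpos : 0 < R := lt_of_lt_of_le one_pos hR1
  -- pointwise bound on Ioi R
  have hpt : ∀ s ∈ Set.Ioi R,
      |Real.sqrt (2 * (lam - q s)) - (Real.sqrt (2 * (lam - lam0))
          - (q s - lam0) / Real.sqrt (2 * (lam - lam0)))|
        ≤ K * s ^ (-(1 + ε)) := by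
    intro s hs
    have hsR : R ≤ s := le_of_lt hs
    have hs1 : (1:ℝ) ≤ s := hR1.trans hsR
    have hspos : (0:ℝ) < s := lt_of_lt_of_le one_pos hs1
    have hsr0 : r0 ≤ s := le_trans (le_trans (le_max_left _ _) hR) hsR
    have hssq : (2 * C / δ) ^ 2 ≤ s :=
      le_trans (le_trans (le_trans (le_max_right _ _) (le_max_right _ _)) hR) hsR
    have hqs := hqb s hsr0
    -- C * s ^ (-(1+ε)/2) ≤ δ / 2
    have hsmall : C * s ^ (-(1 + ε) / 2) ≤ δ / 2 := by
      have h1 : s ^ (-(1 + ε) / 2) ≤ s ^ (-(1/2) : ℝ) :=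
        Real.rpow_le_rpow_of_exponent_le hs1 (by linarith)
      have h2 : s ^ (-(1/2) : ℝ) = (Real.sqrt s)⁻¹ := by
        rw [Real.rpow_neg hspos.le, Real.sqrt_eq_rpow]
      have h3 : 2 * C / δ ≤ Real.sqrt s := by
        have := Real.sqrt_le_sqrt hssq
        rwa [Real.sqrt_sq (by positivity)] at this
      have h4 : (Real.sqrt s)⁻¹ ≤ (2 * C / δ)⁻¹ :=
        inv_anti₀ (by positivity) h3
      have h5 : (2 * C / δ)⁻¹ = δ / (2 * C) := by
        field_simp
      calc C * s ^ (-(1 + ε) / 2) ≤ C * (Real.sqrt s)⁻¹ := by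
            rw [← h2]; exact mul_le_mul_of_nonneg_left h1 hC.le
        _ ≤ C * (δ / (2 * C)) := by
            rw [← h5]; exact mul_le_mul_of_nonneg_left h4 hC.le
        _ = δ / 2 := by field_simp
    have hqs2 : |q s - lam0| ≤ δ / 2 := hqs.trans hsmall
    have hax : 0 ≤ 2 * (lam - lam0) - 2 * (q s - lam0) := by
      have := abs_le.1 hqs2
      linarith [this.1, this.2]
    have ha : 0 < 2 * (lam - lam0) := by linarith
    have hkey := dollard_sqrt_taylor (2 * (lam - lam0)) (2 * (q s - lam0)) ha hax
    have e1 : 2 * (lam - lam0) - 2 * (q s - lam0) = 2 * (lam - q s) := by ring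
    have e2 : (2 * (q s - lam0)) / 2 = q s - lam0 := by ring
    rw [e1, e2] at hkey
    refine hkey.trans ?_
    -- numerator bound
    have hnum : (2 * (q s - lam0)) ^ 2 ≤ 4 * C ^ 2 * s ^ (-(1 + ε)) := by
      have hB : 0 ≤ C * s ^ (-(1 + ε) / 2) := by positivity
      have h6 : (q s - lam0) ^ 2 ≤ (C * s ^ (-(1 + ε) / 2)) ^ 2 := by
        rw [← sq_abs (q s - lam0)]
        exact pow_le_pow_left₀ (abs_nonneg _) hqs 2
      have h7 : (C * s ^ (-(1 + ε) / 2)) ^ 2 = C ^ 2 * s ^ (-(1 + ε)) := by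
        rw [mul_pow, ← Real.rpow_natCast (s ^ (-(1 + ε) / 2)) 2,
          ← Real.rpow_mul hspos.le]
        norm_num
      nlinarith [h6, h7]
    -- denominator bound
    have hden : Real.sqrt (2 * δ) ^ 3 ≤ Real.sqrt (2 * (lam - lam0)) ^ 3 := by
      apply pow_le_pow_left₀ (Real.sqrt_nonneg _)
      exact Real.sqrt_le_sqrt (by linarith)
    have hdenpos : 0 < Real.sqrt (2 * δ) ^ 3 := by
      have : 0 < Real.sqrt (2 * δ) := Real.sqrt_pos.2 (by linarith)
      positivity
    calc (2 * (q s - lam0)) ^ 2 / (2 * Real.sqrt (2 * (lam - lam0)) ^ 3)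
        ≤ (4 * C ^ 2 * s ^ (-(1 + ε))) / (2 * Real.sqrt (2 * δ) ^ 3) := by
          apply div_le_div₀ (by positivity) hnum (by positivity)
          linarith
      _ = K * s ^ (-(1 + ε)) := by
          rw [hK_def]; ring
  -- integrability of the majorant
  have hg_int : IntegrableOn (fun s : ℝ => K * s ^ (-(1 + ε))) (Set.Ioi R) :=
    (integrableOn_Ioi_rpow_of_lt (by linarith) hRpos).const_mul K
  -- measurability of the integrand
  have hf_meas : AEStronglyMeasurable
      (fun s => |Real.sqrt (2 * (lam - q s)) - (Real.sqrt (2 * (lam - lam0))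
          - (q s - lam0) / Real.sqrt (2 * (lam - lam0)))|)
      (volume.restrict (Set.Ioi R)) := by
    apply Measurable.aestronglyMeasurable
    fun_prop
  have hf_int : IntegrableOn
      (fun s => |Real.sqrt (2 * (lam - q s)) - (Real.sqrt (2 * (lam - lam0))
          - (q s - lam0) / Real.sqrt (2 * (lam - lam0)))|)
      (Set.Ioi R) := by
    apply Integrable.mono' hg_int hf_meas
    filter_upwards [ae_restrict_mem measurableSet_Ioi] with s hs
    rw [Real.norm_eq_abs, abs_abs]
    exact hpt s hs
  calc (∫ s in Set.Ioi R,
        |Real.sqrt (2 * (lam - q s)) - (Real.sqrt (2 * (lam - lam0))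
            - (q s - lam0) / Real.sqrt (2 * (lam - lam0)))|)
      ≤ ∫ s in Set.Ioi R, K * s ^ (-(1 + ε)) :=
        setIntegral_mono_on hf_int hg_int measurableSet_Ioi hpt
    _ = K * ∫ s in Set.Ioi R, s ^ (-(1 + ε)) := integral_const_mul K _
    _ = K * (-R ^ (-(1 + ε) + 1) / (-(1 + ε) + 1)) := by
        rw [integral_Ioi_rpow_of_lt (by linarith) hRpos]
    _ = K / ε * R ^ (-ε) := by
        have : -(1 + ε) + 1 = -ε := by ring
        rw [this]
        field_simp
end

section
/- Assume in addition that q is continuous and q(s) ≤ (λ₀+λ₁)/2 for all s ≥ r₀, where λ₁ > λ₀ is fixed. Then there exist a continuous function f : [λ₁,∞) → ℝ and a constant C′ > 0 such that for all λ ≥ λ₁ and all r ≥ r₀ one has |∫_{r₀}^r (2(λ−q(s)))^{−1/2} ds − (r−r₀)·(2(λ−λ₀))^{−1/2} − (2(λ−λ₀))^{−3/2}·∫_{r₀}^r (q(s)−λ₀) ds − f(λ)| ≤ C′·r^{−ε}. (This is the Taylor-expansion step, involving the continuous function f₁, in the proof of the paper's Theorem 2.11.) -/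
open MeasureTheory

private lemma aux_taylor (a u : ℝ) (ha : 0 < a) (hu : u ≤ a / 2) :
    |(Real.sqrt (2 * (a - u)))⁻¹ - (Real.sqrt (2 * a))⁻¹
      - u * ((2 * a) ^ ((3 : ℝ) / 2))⁻¹| ≤ u ^ 2 / (Real.sqrt a * a ^ 2) := by
  set x := Real.sqrt (2 * (a - u)) with hxdef
  set y := Real.sqrt (2 * a) with hydef
  have hau : a ≤ 2 * (a - u) := by linarith
  have hx2 : x ^ 2 = 2 * (a - u) := Real.sq_sqrt (by linarith)
  have hy2 : y ^ 2 = 2 * a := Real.sq_sqrt (by linarith)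
  have hsa : 0 < Real.sqrt a := Real.sqrt_pos.mpr ha
  have hsa2 : Real.sqrt a ^ 2 = a := Real.sq_sqrt ha.le
  have hxa : Real.sqrt a ≤ x := Real.sqrt_le_sqrt hau
  have hya : Real.sqrt a ≤ y := Real.sqrt_le_sqrt (by linarith)
  have hx : 0 < x := lt_of_lt_of_le hsa hxa
  have hy : 0 < y := lt_of_lt_of_le hsa hya
  have h3 : (2 * a) ^ ((3 : ℝ) / 2) = y ^ 3 := by
    rw [show ((3 : ℝ) / 2) = (1 / 2) * 3 by ring, Real.rpow_mul (by linarith),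
      ← Real.sqrt_eq_rpow, show ((3:ℝ)) = ((3:ℕ):ℝ) by norm_num, Real.rpow_natCast]
  have hu2 : y ^ 2 - x ^ 2 = 2 * u := by rw [hx2, hy2]; ring
  have key : x⁻¹ - y⁻¹ - u * (y ^ 3)⁻¹ = (y - x) ^ 2 * (2 * y + x) / (2 * x * y ^ 3) := by
    have hueq : u = (y ^ 2 - x ^ 2) / 2 := by linarith
    rw [hueq]; field_simp; ring
  rw [h3, key, abs_of_nonneg (by positivity)]
  rw [div_le_div_iff₀ (by positivity) (by positivity)]
  have h4 : (y - x) ^ 2 * (y + x) ^ 2 = 4 * u ^ 2 := by nlinarith [hu2]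
  have haeq : a = y ^ 2 / 2 := by linarith
  have h5 : (2 * y + x) * Real.sqrt a * y ≤ (2 * y + x) * x * y := by
    have : (0:ℝ) ≤ (2 * y + x) := by positivity
    nlinarith [mul_le_mul_of_nonneg_left hxa this, hy.le]
  have h6 : (2 * y + x) * x * y ≤ 2 * (x + y) ^ 2 * x := by
    nlinarith [mul_pos hx hy, sq_nonneg x, mul_nonneg (mul_nonneg hx.le hx.le) hx.le,
      mul_nonneg (mul_nonneg hx.le hx.le) hy.le]
  have mid : (2 * y + x) * (Real.sqrt a * a ^ 2) ≤ (y + x) ^ 2 * x * y ^ 3 / 2 := by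
    have h56 := h5.trans h6
    have := mul_le_mul_of_nonneg_right h56 (le_of_lt (by positivity : (0:ℝ) < y ^ 3 / 4))
    calc (2 * y + x) * (Real.sqrt a * a ^ 2) = (2 * y + x) * Real.sqrt a * y * (y ^ 3 / 4) := by
          rw [haeq]; ring
      _ ≤ 2 * (x + y) ^ 2 * x * (y ^ 3 / 4) := this
      _ = (y + x) ^ 2 * x * y ^ 3 / 2 := by ring
  have h7 : (y - x) ^ 2 * ((y + x) ^ 2 * x * y ^ 3 / 2) = u ^ 2 * (2 * x * y ^ 3) := by
    rw [show (y - x) ^ 2 * ((y + x) ^ 2 * x * y ^ 3 / 2)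
        = ((y - x) ^ 2 * (y + x) ^ 2) * (x * y ^ 3 / 2) by ring, h4]; ring
  calc (y - x) ^ 2 * (2 * y + x) * (Real.sqrt a * a ^ 2)
      = (y - x) ^ 2 * ((2 * y + x) * (Real.sqrt a * a ^ 2)) := by ring
    _ ≤ (y - x) ^ 2 * ((y + x) ^ 2 * x * y ^ 3 / 2) :=
        mul_le_mul_of_nonneg_left mid (sq_nonneg _)
    _ = u ^ 2 * (2 * x * y ^ 3) := h7

/-- The remainder function in the Taylor expansion. -/
private noncomputable def Fq (lam0 : ℝ) (q : ℝ → ℝ) (lam s : ℝ) : ℝ :=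
  (Real.sqrt (2 * (lam - q s)))⁻¹ - (Real.sqrt (2 * (lam - lam0)))⁻¹
    - (q s - lam0) * ((2 * (lam - lam0)) ^ ((3 : ℝ) / 2))⁻¹

/-- Taylor-expansion step (involving the continuous function `f₁`)
in the proof of the paper's Theorem 2.11: under the Dollard-type condition, if
moreover `q` is continuous with `q ≤ (λ₀+λ₁)/2`, then there are a continuous
`f : [λ₁,∞) → ℝ` and `C′ > 0` with
`|∫_{r₀}^r (2(λ−q))^{−1/2} ds − (r−r₀)(2(λ−λ₀))^{−1/2}
  − (2(λ−λ₀))^{−3/2} ∫_{r₀}^r (q−λ₀) ds − f(λ)| ≤ C′ r^{−ε}`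
for all `λ ≥ λ₁` and `r ≥ r₀`. -/
theorem dollard_taylor_expansion
    (lam0 lam1 r0 C ε δ : ℝ)
    (hr0 : 1 ≤ r0) (hC : 0 < C) (hε : 0 < ε) (hε1 : ε < 1) (hδ : 0 < δ)
    (hlam : lam0 < lam1)
    (q : ℝ → ℝ) (hqc : ContinuousOn q (Set.Ici r0))
    (hqb : ∀ s, r0 ≤ s → |q s - lam0| ≤ C * s ^ (-(1 + ε) / 2))
    (hqu : ∀ s, r0 ≤ s → q s ≤ (lam0 + lam1) / 2) :
    ∃ f : ℝ → ℝ, ContinuousOn f (Set.Ici lam1) ∧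
      ∃ C' > 0, ∀ lam : ℝ, lam1 ≤ lam → ∀ r : ℝ, r0 ≤ r →
        |(∫ s in r0..r, (Real.sqrt (2 * (lam - q s)))⁻¹)
          - (r - r0) / Real.sqrt (2 * (lam - lam0))
          - ((2 * (lam - lam0)) ^ ((3 : ℝ) / 2))⁻¹ * (∫ s in r0..r, (q s - lam0))
          - f lam|
        ≤ C' * r ^ (-ε) := by
  have hr0pos : (0:ℝ) < r0 := lt_of_lt_of_le one_pos hr0
  set d : ℝ := lam1 - lam0 with hddef
  have hd : 0 < d := by simp only [hddef]; linarith
  set K : ℝ := C ^ 2 / (Real.sqrt d * d ^ 2) with hKdef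
  have hK : 0 < K := by positivity
  set g : ℝ → ℝ := fun s => K * s ^ (-(1 + ε)) with hgdef
  -- pointwise bound on the remainder
  have hbound : ∀ lam, lam1 ≤ lam → ∀ s, r0 ≤ s → |Fq lam0 q lam s| ≤ g s := by
    intro lam hl s hs
    have hs1 : (1:ℝ) ≤ s := hr0.trans hs
    have ha : 0 < lam - lam0 := by linarith
    have hda : d ≤ lam - lam0 := by simp only [hddef]; linarith
    have huu : q s - lam0 ≤ (lam - lam0) / 2 := by
      have := hqu s hs; linarith
    have h1 := aux_taylor (lam - lam0) (q s - lam0) ha huu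
    have e : 2 * ((lam - lam0) - (q s - lam0)) = 2 * (lam - q s) := by ring
    rw [e] at h1
    refine h1.trans ?_
    have hnum : (q s - lam0) ^ 2 ≤ C ^ 2 * s ^ (-(1 + ε)) := by
      have h := hqb s hs
      have h2 : |q s - lam0| ^ 2 ≤ (C * s ^ (-(1 + ε) / 2)) ^ 2 :=
        pow_le_pow_left₀ (abs_nonneg _) h 2
      rw [sq_abs] at h2
      refine h2.trans_eq ?_
      rw [mul_pow, ← Real.rpow_natCast (s ^ (-(1 + ε) / 2)) 2,
        ← Real.rpow_mul (by linarith : (0:ℝ) ≤ s)]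
      norm_num
    have hden : Real.sqrt d * d ^ 2 ≤ Real.sqrt (lam - lam0) * (lam - lam0) ^ 2 := by
      have h1' := Real.sqrt_le_sqrt hda
      have h2' : d ^ 2 ≤ (lam - lam0) ^ 2 := pow_le_pow_left₀ hd.le hda 2
      exact mul_le_mul h1' h2' (by positivity) (Real.sqrt_nonneg _)
    calc (q s - lam0) ^ 2 / (Real.sqrt (lam - lam0) * (lam - lam0) ^ 2)
        ≤ (C ^ 2 * s ^ (-(1 + ε))) / (Real.sqrt d * d ^ 2) :=
          div_le_div₀ (by positivity) hnum (by positivity) hden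
      _ = g s := by simp only [hgdef, hKdef]; ring
  -- integrability of the dominating function
  have hg_int : ∀ c : ℝ, 0 < c → IntegrableOn g (Set.Ioi c) := by
    intro c hc
    exact (integrableOn_Ioi_rpow_of_lt (by linarith) hc).const_mul K
  -- measurability of the remainder
  have hFmeas : ∀ lam, AEStronglyMeasurable (Fq lam0 q lam)
      (volume.restrict (Set.Ioi r0)) := by
    intro lam
    have hqm : AEMeasurable q (volume.restrict (Set.Ioi r0)) :=
      (hqc.mono Set.Ioi_subset_Ici_self).aemeasurable measurableSet_Ioi
    have m1 : Measurable fun x : ℝ => (Real.sqrt (2 * (lam - x)))⁻¹ :=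
      (Real.continuous_sqrt.comp (by continuity)).measurable.inv
    exact (((m1.comp_aemeasurable hqm).sub aemeasurable_const).sub
      ((hqm.sub aemeasurable_const).mul_const _)).aestronglyMeasurable
  -- integrability of the remainder on Ioi r0
  have hFint : ∀ lam, lam1 ≤ lam → IntegrableOn (Fq lam0 q lam) (Set.Ioi r0) := by
    intro lam hl
    refine Integrable.mono' (hg_int r0 hr0pos) (hFmeas lam) ?_
    refine (ae_restrict_iff' measurableSet_Ioi).2 (Filter.Eventually.of_forall ?_)
    intro s hs
    rw [Real.norm_eq_abs]
    exact hbound lam hl s (le_of_lt hs)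
  refine ⟨fun lam => ∫ s in Set.Ioi r0, Fq lam0 q lam s, ?_, K / ε, by positivity, ?_⟩
  · -- continuity of f
    intro lam hl
    simp only [Set.mem_Ici] at hl
    refine continuousWithinAt_of_dominated
      (Filter.Eventually.of_forall fun lam' => hFmeas lam') ?_ (hg_int r0 hr0pos) ?_
    · refine Filter.eventually_of_mem self_mem_nhdsWithin ?_
      intro lam' hl'
      simp only [Set.mem_Ici] at hl'
      refine (ae_restrict_iff' measurableSet_Ioi).2 (Filter.Eventually.of_forall ?_)
      intro s hs
      rw [Real.norm_eq_abs]
      exact hbound lam' hl' s (le_of_lt hs)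
    · refine (ae_restrict_iff' measurableSet_Ioi).2 (Filter.Eventually.of_forall ?_)
      intro s hs
      have hs' : r0 ≤ s := le_of_lt hs
      have hq1 : 0 < lam - q s := by have := hqu s hs'; linarith
      have hq2 : 0 < lam - lam0 := by linarith
      have t1 : ContinuousAt (fun lam' : ℝ => (Real.sqrt (2 * (lam' - q s)))⁻¹) lam := by
        refine ContinuousAt.inv₀ ?_ (ne_of_gt (Real.sqrt_pos.mpr (by linarith)))
        exact (Real.continuous_sqrt.comp (by continuity)).continuousAt
      have t2 : ContinuousAt (fun lam' : ℝ => (Real.sqrt (2 * (lam' - lam0)))⁻¹) lam := by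
        refine ContinuousAt.inv₀ ?_ (ne_of_gt (Real.sqrt_pos.mpr (by linarith)))
        exact (Real.continuous_sqrt.comp (by continuity)).continuousAt
      have t3 : ContinuousAt
          (fun lam' : ℝ => (q s - lam0) * ((2 * (lam' - lam0)) ^ ((3 : ℝ) / 2))⁻¹) lam := by
        refine ContinuousAt.mul continuousAt_const (ContinuousAt.inv₀ ?_ ?_)
        · refine ContinuousAt.comp (g := fun x : ℝ => x ^ ((3:ℝ)/2))
            (f := fun lam' : ℝ => 2 * (lam' - lam0))
            (Real.continuousAt_rpow_const _ _
              (Or.inl (ne_of_gt (by linarith : (0:ℝ) < 2 * (lam - lam0)))))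
            (by continuity : Continuous fun lam' : ℝ => 2 * (lam' - lam0)).continuousAt
        · exact ne_of_gt (Real.rpow_pos_of_pos (by linarith) _)
      exact ((t1.sub t2).sub t3).continuousWithinAt
  · -- main estimate
    intro lam hl r hr
    have hrpos : 0 < r := lt_of_lt_of_le hr0pos hr
    have hqlt : ∀ s ∈ Set.Ici r0, 0 < lam - q s := by
      intro s hs; have := hqu s hs; linarith
    have hc1 : ContinuousOn (fun s => (Real.sqrt (2 * (lam - q s)))⁻¹) (Set.Ici r0) := by
      refine ContinuousOn.inv₀ ?_ ?_
      · exact Real.continuous_sqrt.comp_continuousOn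
          (continuousOn_const.mul (continuousOn_const.sub hqc))
      · intro s hs
        exact ne_of_gt (Real.sqrt_pos.mpr (by have := hqlt s hs; linarith))
    have hsub : Set.uIcc r0 r ⊆ Set.Ici r0 := by
      rw [Set.uIcc_of_le hr]; exact Set.Icc_subset_Ici_self
    have hI1 : IntervalIntegrable (fun s => (Real.sqrt (2 * (lam - q s)))⁻¹) volume r0 r :=
      (hc1.mono hsub).intervalIntegrable
    have hIq : IntervalIntegrable (fun s => q s - lam0) volume r0 r :=
      ((hqc.sub continuousOn_const).mono hsub).intervalIntegrable
    have e1 : (r - r0) / Real.sqrt (2 * (lam - lam0))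
        = ∫ _ in r0..r, (Real.sqrt (2 * (lam - lam0)))⁻¹ := by
      rw [intervalIntegral.integral_const, smul_eq_mul, div_eq_mul_inv]
    have e2 : ((2 * (lam - lam0)) ^ ((3 : ℝ) / 2))⁻¹ * (∫ s in r0..r, (q s - lam0))
        = ∫ s in r0..r, (q s - lam0) * ((2 * (lam - lam0)) ^ ((3 : ℝ) / 2))⁻¹ := by
      rw [intervalIntegral.integral_mul_const, mul_comm]
    have e3 : (∫ s in r0..r, (Real.sqrt (2 * (lam - q s)))⁻¹)
          - (r - r0) / Real.sqrt (2 * (lam - lam0))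
          - ((2 * (lam - lam0)) ^ ((3 : ℝ) / 2))⁻¹ * (∫ s in r0..r, (q s - lam0))
        = ∫ s in r0..r, Fq lam0 q lam s := by
      rw [e1, e2, ← intervalIntegral.integral_sub hI1 intervalIntegrable_const,
        ← intervalIntegral.integral_sub (hI1.sub intervalIntegrable_const)
          (IntervalIntegrable.mul_const hIq _)]
      rfl
    have hsplit : (∫ s in Set.Ioi r0, Fq lam0 q lam s)
        = (∫ s in r0..r, Fq lam0 q lam s) + ∫ s in Set.Ioi r, Fq lam0 q lam s := by
      rw [intervalIntegral.integral_of_le hr,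
        ← setIntegral_union (Set.Ioc_disjoint_Ioi le_rfl) measurableSet_Ioi
          ((hFint lam hl).mono_set Set.Ioc_subset_Ioi_self)
          ((hFint lam hl).mono_set (Set.Ioi_subset_Ioi hr)),
        Set.Ioc_union_Ioi_eq_Ioi hr]
    have habs : |(∫ s in r0..r, (Real.sqrt (2 * (lam - q s)))⁻¹)
          - (r - r0) / Real.sqrt (2 * (lam - lam0))
          - ((2 * (lam - lam0)) ^ ((3 : ℝ) / 2))⁻¹ * (∫ s in r0..r, (q s - lam0))
          - (∫ s in Set.Ioi r0, Fq lam0 q lam s)|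
        = |∫ s in Set.Ioi r, Fq lam0 q lam s| := by
      rw [e3, hsplit]
      rw [show (∫ s in r0..r, Fq lam0 q lam s)
          - ((∫ s in r0..r, Fq lam0 q lam s) + ∫ s in Set.Ioi r, Fq lam0 q lam s)
          = -(∫ s in Set.Ioi r, Fq lam0 q lam s) by ring, abs_neg]
    rw [habs]
    have hnorm : ‖∫ s in Set.Ioi r, Fq lam0 q lam s‖ ≤ ∫ s in Set.Ioi r, g s := by
      refine norm_integral_le_of_norm_le (hg_int r hrpos) ?_
      refine (ae_restrict_iff' measurableSet_Ioi).2 (Filter.Eventually.of_forall ?_)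
      intro s hs
      rw [Real.norm_eq_abs]
      exact hbound lam hl s (hr.trans (le_of_lt hs))
    rw [← Real.norm_eq_abs]
    refine hnorm.trans ?_
    have : (∫ s in Set.Ioi r, g s) = K / ε * r ^ (-ε) := by
      simp only [hgdef]
      rw [MeasureTheory.integral_const_mul, integral_Ioi_rpow_of_lt (by linarith) hrpos]
      rw [show -(1 + ε) + 1 = -ε by ring]
      field_simp
    rw [this]
end

section
/- Fix constants 0 < μ₁ < μ₂. Then there exist C′ > 0 and T₀ > 0 such that for every t ≥ T₀ and every r with (t,r) ∈ Ω_c and μ₁ ≤ (r−r₁)/t ≤ μ₂ one has |λ_c(t,r) − λ₀ − (r−r₁)²/(2t²)| ≤ C′·t^{−(1+ε)/2}. (This is the asymptotic expansion of the stationary point λ_c derived from (4.16) in the proof of the paper's Theorem 2.11.) -/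
/-!
With `w = 1` the equation `T (λ_c, r) = t` says that `t` is the travel time
`∫_{r₁}^r ds / √(2(λ_c - q s))`. Since `λ_c - q ≥ (λ₁ - λ₀)/2`, replacing `q` by `λ₀` changes the
integrand by `O(|q s - λ₀|) = O(s^{-(1+ε)/2})`, whose integral up to `r ≤ (1 + μ₂) t` is
`O(t^{(1-ε)/2})`. Hence `u := (r - r₁)/√(2(λ_c - λ₀))` satisfies `u = t + O(t^{(1-ε)/2})`, so
`u ≥ t/2` for large `t`, and `λ_c - λ₀ = (r - r₁)²/(2u²)` differs from `(r - r₁)²/(2t²)` by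
`O(|t - u| / t) = O(t^{-(1+ε)/2})`.
-/

open MeasureTheory Real Set

lemma abs_one_div_sqrt_sub_one_div_sqrt_le {d a b : ℝ} (hd : 0 < d) (ha : d ≤ a) (hb : d ≤ b) :
    |1 / √a - 1 / √b| ≤ |b - a| / (d * √d) := by
  have hsd : 0 < √d := sqrt_pos.2 hd
  have hsa : 0 < √a := hsd.trans_le (sqrt_le_sqrt ha)
  have hsb : 0 < √b := hsd.trans_le (sqrt_le_sqrt hb)
  have hden_pos : 0 < √a * √b * (√b + √a) := by positivity
  have hdiff : 1 / √a - 1 / √b = (b - a) / (√a * √b * (√b + √a)) := by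
    rw [div_sub_div _ _ hsa.ne' hsb.ne', div_eq_div_iff (by positivity) hden_pos.ne']
    linear_combination (√a * √b) * (sq_sqrt (hd.le.trans hb) - sq_sqrt (hd.le.trans ha))
  have hden : d * √d ≤ √a * √b * (√b + √a) :=
    calc d * √d = √d * √d * √d := by rw [mul_self_sqrt hd.le]
      _ ≤ √a * √b * √b := by gcongr
      _ ≤ √a * √b * (√b + √a) := by gcongr; exact le_add_of_nonneg_right hsa.le
  rw [hdiff, abs_div, abs_of_pos hden_pos]
  exact div_le_div_of_nonneg_left (abs_nonneg _) (by positivity) hden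

lemma integral_rpow_le {p a b : ℝ} (hp : -1 < p) (ha : 0 ≤ a) :
    ∫ s in a..b, s ^ p ≤ b ^ (p + 1) / (p + 1) := by
  have hp1 : 0 < p + 1 := by linarith
  rw [integral_rpow (Or.inl hp)]
  gcongr
  linarith [rpow_nonneg ha (p + 1)]

lemma abs_integral_one_div_sqrt_sub_le {q : ℝ → ℝ} {lam lam0 d C p a b : ℝ}
    (hd : 0 < d) (hC : 0 ≤ C) (hp : -1 < p) (ha : 0 ≤ a) (hab : a ≤ b)
    (hq : ContinuousOn q (Icc a b))
    (hlam0 : d ≤ 2 * (lam - lam0)) (hlam : ∀ s ∈ Icc a b, d ≤ 2 * (lam - q s))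
    (hqC : ∀ s ∈ Icc a b, |q s - lam0| ≤ C * s ^ p) :
    |(∫ s in a..b, 1 / √(2 * (lam - q s))) - (b - a) / √(2 * (lam - lam0))|
      ≤ 2 * C / (d * √d) * (b ^ (p + 1) / (p + 1)) := by
  have hint : IntervalIntegrable (fun s => 1 / √(2 * (lam - q s))) volume a b := by
    refine ContinuousOn.intervalIntegrable ?_
    rw [uIcc_of_le hab]
    refine continuousOn_const.div (by fun_prop) fun s hs => ?_
    exact (sqrt_pos.2 (hd.trans_le (hlam s hs))).ne'
  have hpointwise : ∀ s ∈ Ioc a b,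
      ‖1 / √(2 * (lam - q s)) - 1 / √(2 * (lam - lam0))‖ ≤ 2 * C / (d * √d) * s ^ p := by
    intro s hs
    have hs' : s ∈ Icc a b := Ioc_subset_Icc_self hs
    calc ‖1 / √(2 * (lam - q s)) - 1 / √(2 * (lam - lam0))‖
        ≤ |2 * (lam - lam0) - 2 * (lam - q s)| / (d * √d) :=
          abs_one_div_sqrt_sub_one_div_sqrt_le hd (hlam s hs') hlam0
      _ = 2 * |q s - lam0| / (d * √d) := by
          rw [← abs_two, ← abs_mul, abs_two]; ring_nf
      _ ≤ 2 * C / (d * √d) * s ^ p := by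
          rw [div_mul_eq_mul_div, mul_assoc]
          gcongr
          exact hqC s hs'
  calc |(∫ s in a..b, 1 / √(2 * (lam - q s))) - (b - a) / √(2 * (lam - lam0))|
      = ‖∫ s in a..b, (1 / √(2 * (lam - q s)) - 1 / √(2 * (lam - lam0)))‖ := by
        rw [intervalIntegral.integral_sub hint intervalIntegrable_const,
          intervalIntegral.integral_const, smul_eq_mul, mul_one_div, Real.norm_eq_abs]
    _ ≤ ∫ s in a..b, 2 * C / (d * √d) * s ^ p :=
        intervalIntegral.norm_integral_le_of_norm_le hab (Filter.Eventually.of_forall hpointwise)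
          ((intervalIntegral.intervalIntegrable_rpow' hp).const_mul _)
    _ ≤ 2 * C / (d * √d) * (b ^ (p + 1) / (p + 1)) := by
        rw [intervalIntegral.integral_const_mul]
        gcongr
        exact integral_rpow_le hp ha

lemma abs_sq_div_sub_sq_div_le {A μ t u : ℝ} (ht : 0 < t) (hA : 0 ≤ A) (hAt : A ≤ μ * t)
    (hu : |t - u| ≤ t / 2) :
    |A ^ 2 / (2 * u ^ 2) - A ^ 2 / (2 * t ^ 2)| ≤ 5 * μ ^ 2 * |t - u| / t := by
  obtain ⟨hu₁, hu₂⟩ := abs_le.1 hu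
  have hu₀ : t / 2 ≤ u := by linarith
  have hsum : |t + u| ≤ 5 * t / 2 := abs_le.2 ⟨by linarith, by linarith⟩
  have hA2 : A ^ 2 ≤ μ ^ 2 * t ^ 2 := by rw [← mul_pow]; gcongr
  have hu2 : (t / 2) ^ 2 ≤ u ^ 2 := by gcongr
  have hupos : 0 < u := by linarith
  calc |A ^ 2 / (2 * u ^ 2) - A ^ 2 / (2 * t ^ 2)|
      = A ^ 2 * (|t - u| * |t + u|) / (2 * u ^ 2 * t ^ 2) := by
        rw [show A ^ 2 / (2 * u ^ 2) - A ^ 2 / (2 * t ^ 2)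
            = A ^ 2 * ((t - u) * (t + u)) / (2 * u ^ 2 * t ^ 2) by field_simp; ring,
          abs_div, abs_mul, abs_mul, abs_of_nonneg (sq_nonneg A),
          abs_of_pos (by positivity : (0 : ℝ) < 2 * u ^ 2 * t ^ 2)]
    _ ≤ μ ^ 2 * t ^ 2 * (|t - u| * (5 * t / 2)) / (2 * (t / 2) ^ 2 * t ^ 2) := by
        gcongr
    _ = 5 * μ ^ 2 * |t - u| / t := by
        field_simp

lemma mul_rpow_one_sub_le_half {K p t : ℝ} (hK : 0 ≤ K) (hp : 0 < p) (ht : 0 < t)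
    (hKt : (2 * K) ^ p⁻¹ ≤ t) :
    K * t ^ (1 - p) ≤ t / 2 := by
  have h2K : 2 * K ≤ t ^ p := by
    calc 2 * K = ((2 * K) ^ p⁻¹) ^ p := by
          rw [← rpow_mul (by positivity), inv_mul_cancel₀ hp.ne', rpow_one]
      _ ≤ t ^ p := by gcongr
  calc K * t ^ (1 - p) ≤ t ^ p / 2 * t ^ (1 - p) := by gcongr; linarith
    _ = t / 2 := by rw [div_mul_eq_mul_div, ← rpow_add ht]; norm_num

lemma abs_sub_sq_div_le_of_abs_sub_div_sqrt_le {x A μ K p t : ℝ} (hx : 0 < x) (hA : 0 < A)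
    (hAt : A ≤ μ * t) (hK : 0 ≤ K) (hp : 0 < p) (ht : 0 < t) (hKt : (2 * K) ^ p⁻¹ ≤ t)
    (hE : |t - A / √(2 * x)| ≤ K * t ^ (1 - p)) :
    |x - A ^ 2 / (2 * t ^ 2)| ≤ 5 * μ ^ 2 * K * t ^ (-p) := by
  have hx' : x = A ^ 2 / (2 * (A / √(2 * x)) ^ 2) := by
    rw [div_pow, sq_sqrt (by positivity)]
    field_simp
  rw [hx']
  calc |A ^ 2 / (2 * (A / √(2 * x)) ^ 2) - A ^ 2 / (2 * t ^ 2)|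
      ≤ 5 * μ ^ 2 * |t - A / √(2 * x)| / t :=
        abs_sq_div_sub_sq_div_le ht hA.le hAt (hE.trans (mul_rpow_one_sub_le_half hK hp ht hKt))
    _ ≤ 5 * μ ^ 2 * (K * t ^ (1 - p)) / t := by gcongr
    _ = 5 * μ ^ 2 * K * t ^ (-p) := by
        rw [rpow_sub ht, rpow_one, rpow_neg ht.le]
        field_simp

theorem dollard_stationary_point_asymptotics_general
    (lam0 lam1 r1 C ε : ℝ)
    (hlam : lam0 < lam1) (hr1 : 1 ≤ r1)
    (hC : 0 < C) (hε : 0 < ε) (hε1 : ε < 1)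
    (w q : ℝ → ℝ)
    (hw1 : ∀ s, r1 ≤ s → w s = 1)
    (hq : ContinuousOn q (Set.Ici r1))
    (hqu : ∀ s, r1 ≤ s → q s ≤ (lam0 + lam1) / 2)
    (hqd : ∀ s, r1 ≤ s → |q s - lam0| ≤ C * s ^ (-(1 + ε) / 2))
    (T : ℝ → ℝ → ℝ)
    (hT : ∀ lam r, T lam r = ∫ s in r1..r, w s / Real.sqrt (2 * (lam - q s)))
    (Ωc : Set (ℝ × ℝ))
    (hΩc : Ωc = {p : ℝ × ℝ | 0 < p.1 ∧ r1 < p.2 ∧ p.1 < T lam1 p.2})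
    (lamc : ℝ → ℝ → ℝ)
    (hlamc : ∀ p ∈ Ωc, lam1 < lamc p.1 p.2 ∧ T (lamc p.1 p.2) p.2 = p.1)
    (μ1 μ2 : ℝ) (hμ1 : 0 < μ1) (hμ12 : μ1 < μ2) :
    ∃ C' > 0, ∃ T0 > 0, ∀ t : ℝ, T0 ≤ t → ∀ r : ℝ, (t, r) ∈ Ωc →
      μ1 ≤ (r - r1) / t → (r - r1) / t ≤ μ2 →
      |lamc t r - lam0 - (r - r1) ^ 2 / (2 * t ^ 2)|
        ≤ C' * t ^ (-(1 + ε) / 2) := by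
  have hd : 0 < lam1 - lam0 := sub_pos.2 hlam
  have hμ2 : 0 < μ2 := hμ1.trans hμ12
  simp only [neg_div]
  set p : ℝ := (1 + ε) / 2 with hp_def
  have hp : 0 < p := by positivity
  set K : ℝ := 2 * C / ((lam1 - lam0) * √(lam1 - lam0)) * ((1 + μ2) ^ (1 - p) / (1 - p))
  have hp1 : 0 < 1 - p := by linarith
  have hK : 0 < K := by positivity
  refine ⟨5 * μ2 ^ 2 * K, by positivity, max r1 ((2 * K) ^ p⁻¹), by positivity, ?_⟩
  intro t ht r hmem _ hμ2t
  obtain ⟨ht0, hr, -⟩ : 0 < t ∧ r1 < r ∧ _ := by simpa [hΩc] using hmem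
  obtain ⟨hlamc1, hTt⟩ : lam1 < lamc t r ∧ T (lamc t r) r = t := hlamc (t, r) hmem
  have hA : r - r1 ≤ μ2 * t := (div_le_iff₀ ht0).1 hμ2t
  have htravel : ∫ s in r1..r, 1 / √(2 * (lamc t r - q s)) = t := by
    conv_rhs => rw [← hTt, hT]
    refine intervalIntegral.integral_congr fun s hs => ?_
    rw [uIcc_of_le hr.le] at hs
    simp only [hw1 s hs.1]
  have hE := abs_integral_one_div_sqrt_sub_le (lam := lamc t r) (lam0 := lam0) (p := -p) hd hC.le
    (by linarith) (by linarith) hr.le (hq.mono Icc_subset_Ici_self) (by linarith)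
    (fun s hs => by linarith [hqu s hs.1])
    (fun s hs => by rw [hp_def, ← neg_div]; exact hqd s hs.1)
  rw [htravel, neg_add_eq_sub] at hE
  refine abs_sub_sq_div_le_of_abs_sub_div_sqrt_le (by linarith) (sub_pos.2 hr) hA hK.le hp ht0
    (le_of_max_le_right ht) (hE.trans ?_)
  calc 2 * C / ((lam1 - lam0) * √(lam1 - lam0)) * (r ^ (1 - p) / (1 - p))
      ≤ 2 * C / ((lam1 - lam0) * √(lam1 - lam0)) * (((1 + μ2) * t) ^ (1 - p) / (1 - p)) := by
        gcongr <;> linarith [le_of_max_le_left ht]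
    _ = K * t ^ (1 - p) := by rw [mul_rpow (by positivity) ht0.le]; ring

/-- Asymptotic expansion of the stationary point `λ_c` in the
Dollard regime (from (4.16) in the proof of the paper's Theorem 2.11): for fixed
`0 < μ₁ < μ₂` there are `C′ > 0` and `T₀ > 0` such that for all `t ≥ T₀` and all
`r` with `(t,r) ∈ Ω_c` and `μ₁ ≤ (r−r₁)/t ≤ μ₂`,
`|λ_c(t,r) − λ₀ − (r−r₁)²/(2t²)| ≤ C′·t^{−(1+ε)/2}`. -/
theorem dollard_stationary_point_asymptotics
    (lam0 lam1 r1 c1 c2 m C ε : ℝ)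
    (hlam : lam0 < lam1) (hr1 : 1 ≤ r1) (hc1 : 0 < c1) (hc12 : c1 ≤ c2)
    (hm : m ≤ (lam0 + lam1) / 2)
    (hC : 0 < C) (hε : 0 < ε) (hε1 : ε < 1)
    (w q : ℝ → ℝ)
    (hw : ContinuousOn w (Set.Ici r1))
    (hwl : ∀ s, r1 ≤ s → c1 ≤ w s) (hwu : ∀ s, r1 ≤ s → w s ≤ c2)
    (hw1 : ∀ s, r1 ≤ s → w s = 1)
    (hq : ContinuousOn q (Set.Ici r1))
    (hql : ∀ s, r1 ≤ s → m ≤ q s) (hqu : ∀ s, r1 ≤ s → q s ≤ (lam0 + lam1) / 2)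
    (hqd : ∀ s, r1 ≤ s → |q s - lam0| ≤ C * s ^ (-(1 + ε) / 2))
    (T : ℝ → ℝ → ℝ)
    (hT : ∀ lam r, T lam r = ∫ s in r1..r, w s / Real.sqrt (2 * (lam - q s)))
    (Ωc : Set (ℝ × ℝ))
    (hΩc : Ωc = {p : ℝ × ℝ | 0 < p.1 ∧ r1 < p.2 ∧ p.1 < T lam1 p.2})
    (lamc : ℝ → ℝ → ℝ)
    (hlamc : ∀ p ∈ Ωc, lam1 < lamc p.1 p.2 ∧ T (lamc p.1 p.2) p.2 = p.1)
    (μ1 μ2 : ℝ) (hμ1 : 0 < μ1) (hμ12 : μ1 < μ2) :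
    ∃ C' > 0, ∃ T0 > 0, ∀ t : ℝ, T0 ≤ t → ∀ r : ℝ, (t, r) ∈ Ωc →
      μ1 ≤ (r - r1) / t → (r - r1) / t ≤ μ2 →
      |lamc t r - lam0 - (r - r1) ^ 2 / (2 * t ^ 2)|
        ≤ C' * t ^ (-(1 + ε) / 2) :=
  dollard_stationary_point_asymptotics_general lam0 lam1 r1 C ε hlam hr1 hC hε hε1 w q hw1 hq hqu
    hqd T hT Ωc hΩc lamc hlamc μ1 μ2 hμ1 hμ12
end

section
/- Fix constants 0 < μ₁ < μ₂. Define on Ω_c the exact phase K₁(t,r) = ∫_{r₁}^r √(2(λ_c(t,r)−q(s))) ds − t·λ_c(t,r), the Dollard phase K_do(t,r) = (r−r₁)²/(2t) − t·λ₀ − (t/(r−r₁))·∫_{r₁}^r (q(s)−λ₀) ds, and the phase shift θ(λ) = ∫_{r₁}^∞ (√(2(λ−q(s))) − b_do(λ,s)) ds for λ ≥ λ₁ (this integral converges absolutely). Then there exist C′ > 0, ε′ > 0 and T₀ > 0 such that for every t ≥ T₀ and every r with (t,r) ∈ Ω_c and μ₁ ≤ (r−r₁)/t ≤ μ₂ one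 has |K₁(t,r) − K_do(t,r) − θ(λ_c(t,r))| ≤ C′·t^{−ε′}. (This is the phase comparison establishing (4.14) in the proof of the paper's Theorem 2.11 on Dollard-modified wave operators.) -/
/-!
Write `a = √(2(λ - q))` and `b = √(2(λ - λ₀))`. Since `a² = b² - 2(q - λ₀)`, one has
`a - b_do = -2(q - λ₀)² / (b (a + b)²)` and `1/a - 1/b = 2(q - λ₀) / (a b (a + b))`, which the
Dollard decay makes `O(s^{-(1+ε)})` and `O(s^{-(1+ε)/2})`. At the stationary point
`t = ∫_{r₁}^r 1/a`, so `G := ∫_{r₁}^r (1/a - 1/b) = t - (r - r₁)/b`, and with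
`Q := ∫_{r₁}^r (q - λ₀)` the phase difference is exactly
`K₁ - K_do - θ = -G² b² / (2t) + Q G / (r - r₁) - ∫_r^∞ (a - b_do)`.
Here `G, Q = O(r^{(1-ε)/2})`, the tail is `O(r^{-ε})`, `b` stays bounded because
`(r - r₁)/t ≤ μ₂`, and `r` is comparable to `t`, so each term is `O(t^{-ε})`.
-/

open MeasureTheory Set

/-- The paper's `b_do(λ, s)` with `x = q(s)`: the first-order expansion of `√(2(λ - x))` at
`x = λ₀`. -/
noncomputable def dollardMomentum (lam0 lam x : ℝ) : ℝ :=
  √(2 * (lam - lam0)) - (x - lam0) / √(2 * (lam - lam0))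

lemma sub_sub_div_eq_of_sq_eq {a b u : ℝ} (hb : b ≠ 0) (hab : a + b ≠ 0)
    (h : a ^ 2 = b ^ 2 - 2 * u) : a - (b - u / b) = -(2 * u ^ 2) / (b * (a + b) ^ 2) := by
  field_simp
  linear_combination (((a + b) ^ 2 + 2 * u + b ^ 2 - a ^ 2) / 2) * h

lemma one_div_sub_one_div_eq_of_sq_eq {a b u : ℝ} (ha : a ≠ 0) (hb : b ≠ 0) (hab : a + b ≠ 0)
    (h : a ^ 2 = b ^ 2 - 2 * u) : 1 / a - 1 / b = 2 * u / (a * b * (a + b)) := by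
  field_simp
  linear_combination (-1) * h

lemma abs_sub_sub_div_le_of_sq_eq {a b u δ : ℝ} (hδ : 0 < δ) (ha : δ ≤ a) (hb : δ ≤ b)
    (h : a ^ 2 = b ^ 2 - 2 * u) : |a - (b - u / b)| ≤ u ^ 2 / (2 * δ ^ 3) := by
  have hb0 : 0 < b := hδ.trans_le hb
  have hab : 0 < a + b := by linarith
  rw [sub_sub_div_eq_of_sq_eq hb0.ne' hab.ne' h, abs_div, abs_neg, abs_of_nonneg (by positivity),
    abs_of_pos (by positivity)]
  calc 2 * u ^ 2 / (b * (a + b) ^ 2) ≤ 2 * u ^ 2 / (δ * (2 * δ) ^ 2) := by gcongr; linarith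
    _ = u ^ 2 / (2 * δ ^ 3) := by field_simp

lemma abs_one_div_sub_one_div_le_of_sq_eq {a b u δ : ℝ} (hδ : 0 < δ) (ha : δ ≤ a) (hb : δ ≤ b)
    (h : a ^ 2 = b ^ 2 - 2 * u) : |1 / a - 1 / b| ≤ |u| / δ ^ 3 := by
  have ha0 : 0 < a := hδ.trans_le ha
  have hb0 : 0 < b := hδ.trans_le hb
  have hab : 0 < a + b := by linarith
  rw [one_div_sub_one_div_eq_of_sq_eq ha0.ne' hb0.ne' hab.ne' h, abs_div,
    abs_of_pos (by positivity : 0 < a * b * (a + b)), abs_mul, abs_two]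
  calc 2 * |u| / (a * b * (a + b)) ≤ 2 * |u| / (δ * δ * (2 * δ)) := by gcongr; linarith
    _ = |u| / δ ^ 3 := by field_simp

section Momentum

variable {lam0 lam1 lam x : ℝ}

lemma sqrt_sub_le_sqrt_two_mul_sub (hl : lam1 ≤ lam) (hx : x ≤ (lam0 + lam1) / 2) :
    √(lam1 - lam0) ≤ √(2 * (lam - x)) :=
  Real.sqrt_le_sqrt (by linarith)

lemma sq_sqrt_two_mul_sub_eq (hlam : lam0 < lam1) (hl : lam1 ≤ lam)
    (hx : x ≤ (lam0 + lam1) / 2) :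
    √(2 * (lam - x)) ^ 2 = √(2 * (lam - lam0)) ^ 2 - 2 * (x - lam0) := by
  rw [Real.sq_sqrt (by linarith), Real.sq_sqrt (by linarith)]
  ring

lemma abs_sqrt_sub_dollardMomentum_le (hlam : lam0 < lam1) (hl : lam1 ≤ lam)
    (hx : x ≤ (lam0 + lam1) / 2) :
    |√(2 * (lam - x)) - dollardMomentum lam0 lam x| ≤ (x - lam0) ^ 2 / (2 * √(lam1 - lam0) ^ 3) :=
  abs_sub_sub_div_le_of_sq_eq (Real.sqrt_pos.2 (sub_pos.2 hlam))
    (sqrt_sub_le_sqrt_two_mul_sub hl hx) (sqrt_sub_le_sqrt_two_mul_sub hl (by linarith))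
    (sq_sqrt_two_mul_sub_eq hlam hl hx)

lemma abs_one_div_sqrt_sub_one_div_sqrt_le_s12 (hlam : lam0 < lam1) (hl : lam1 ≤ lam)
    (hx : x ≤ (lam0 + lam1) / 2) :
    |1 / √(2 * (lam - x)) - 1 / √(2 * (lam - lam0))| ≤ |x - lam0| / √(lam1 - lam0) ^ 3 :=
  abs_one_div_sub_one_div_le_of_sq_eq (Real.sqrt_pos.2 (sub_pos.2 hlam))
    (sqrt_sub_le_sqrt_two_mul_sub hl hx) (sqrt_sub_le_sqrt_two_mul_sub hl (by linarith))
    (sq_sqrt_two_mul_sub_eq hlam hl hx)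

lemma abs_sqrt_sub_dollardMomentum_le_rpow {C ε s : ℝ} (hlam : lam0 < lam1) (hl : lam1 ≤ lam)
    (hx : x ≤ (lam0 + lam1) / 2) (hs : 0 < s) (hxs : |x - lam0| ≤ C * s ^ (-(1 + ε) / 2)) :
    |√(2 * (lam - x)) - dollardMomentum lam0 lam x|
      ≤ C ^ 2 / (2 * √(lam1 - lam0) ^ 3) * s ^ (-(1 + ε)) := by
  have hsq : (x - lam0) ^ 2 ≤ C ^ 2 * s ^ (-(1 + ε)) :=
    calc (x - lam0) ^ 2 = |x - lam0| ^ 2 := (sq_abs _).symm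
      _ ≤ (C * s ^ (-(1 + ε) / 2)) ^ 2 := by gcongr
      _ = C ^ 2 * s ^ (-(1 + ε)) := by
        rw [mul_pow, ← Real.rpow_mul_natCast hs.le]
        norm_num
  calc _ ≤ (x - lam0) ^ 2 / (2 * √(lam1 - lam0) ^ 3) := abs_sqrt_sub_dollardMomentum_le hlam hl hx
    _ ≤ C ^ 2 * s ^ (-(1 + ε)) / (2 * √(lam1 - lam0) ^ 3) := by gcongr
    _ = _ := by ring

end Momentum

lemma abs_intervalIntegral_le_of_abs_le_rpow {F : ℝ → ℝ} {a b c p : ℝ} (ha : 0 < a) (hab : a ≤ b)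
    (hp : -1 < p) (hF : ∀ s ∈ Icc a b, |F s| ≤ c * s ^ p) :
    |∫ s in a..b, F s| ≤ c / (p + 1) * b ^ (p + 1) := by
  have hc : 0 ≤ c := nonneg_of_mul_nonneg_left ((abs_nonneg _).trans (hF a ⟨le_rfl, hab⟩))
    (Real.rpow_pos_of_pos ha p)
  have hp1 : 0 < p + 1 := by linarith
  calc |∫ s in a..b, F s| ≤ ∫ s in a..b, c * s ^ p := by
        rw [← Real.norm_eq_abs]
        exact intervalIntegral.norm_integral_le_of_norm_le hab
          (ae_of_all _ fun s hs => hF s (Ioc_subset_Icc_self hs))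
          ((intervalIntegral.intervalIntegrable_rpow' hp).const_mul c)
    _ = c / (p + 1) * (b ^ (p + 1) - a ^ (p + 1)) := by
        rw [intervalIntegral.integral_const_mul, integral_rpow (Or.inl hp)]
        ring
    _ ≤ c / (p + 1) * b ^ (p + 1) := by
        gcongr
        exact sub_le_self _ (Real.rpow_nonneg ha.le _)

lemma abs_integral_Ioi_le_of_abs_le_rpow {F : ℝ → ℝ} {a c p : ℝ} (ha : 0 < a) (hp : p < -1)
    (hF : ∀ s ∈ Ioi a, |F s| ≤ c * s ^ p) :
    |∫ s in Ioi a, F s| ≤ c / -(p + 1) * a ^ (p + 1) := by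
  calc |∫ s in Ioi a, F s| ≤ ∫ s in Ioi a, c * s ^ p := by
        rw [← Real.norm_eq_abs]
        exact norm_integral_le_of_norm_le ((integrableOn_Ioi_rpow_of_lt hp ha).const_mul c)
          ((ae_restrict_mem measurableSet_Ioi).mono hF)
    _ = c / -(p + 1) * a ^ (p + 1) := by
        rw [integral_const_mul, integral_Ioi_rpow_of_lt hp ha, div_neg, neg_div]
        ring

lemma integrableOn_Ioi_of_abs_le_rpow {F : ℝ → ℝ} {a c p : ℝ} (ha : 0 < a) (hp : p < -1)
    (hFc : ContinuousOn F (Ioi a)) (hF : ∀ s ∈ Ioi a, |F s| ≤ c * s ^ p) :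
    IntegrableOn F (Ioi a) :=
  ((integrableOn_Ioi_rpow_of_lt hp ha).const_mul c).mono'
    (hFc.aestronglyMeasurable measurableSet_Ioi) ((ae_restrict_mem measurableSet_Ioi).mono hF)

lemma intervalIntegrable_one_div_sqrt_two_mul_sub {q : ℝ → ℝ} {r1 r L : ℝ} (hr : r1 ≤ r)
    (hq : ContinuousOn q (Icc r1 r)) (hqL : ∀ s ∈ Icc r1 r, q s < L) :
    IntervalIntegrable (fun s => 1 / √(2 * (L - q s))) volume r1 r :=
  (continuousOn_const.div (by fun_prop)
    fun s hs => (Real.sqrt_pos.2 (by linarith [hqL s hs])).ne').intervalIntegrable_of_Icc hr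

lemma two_mul_sub_le_sq_of_eq_integral {q : ℝ → ℝ} {r1 r t L x : ℝ} (hr : r1 < r) (ht0 : 0 < t)
    (hq : ContinuousOn q (Icc r1 r)) (hqx : ∀ s ∈ Icc r1 r, q s ≤ x) (hx : x < L)
    (ht : t = ∫ s in r1..r, 1 / √(2 * (L - q s))) : 2 * (L - x) ≤ ((r - r1) / t) ^ 2 := by
  have hv : 0 < √(2 * (L - x)) := Real.sqrt_pos.2 (by linarith)
  have ht_le : t ≤ (r - r1) / √(2 * (L - x)) :=
    calc t ≤ ∫ _ in r1..r, 1 / √(2 * (L - x)) := by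
          rw [ht]
          refine intervalIntegral.integral_mono_on hr.le
            (intervalIntegrable_one_div_sqrt_two_mul_sub hr.le hq fun s hs =>
              (hqx s hs).trans_lt hx)
            intervalIntegrable_const fun s hs => ?_
          exact one_div_le_one_div_of_le hv (Real.sqrt_le_sqrt (by linarith [hqx s hs]))
      _ = (r - r1) / √(2 * (L - x)) := by
          rw [intervalIntegral.integral_const, smul_eq_mul, mul_one_div]
  have hv_le : √(2 * (L - x)) ≤ (r - r1) / t := by
    rw [le_div_iff₀ ht0, mul_comm]
    rwa [le_div_iff₀ hv] at ht_le
  calc 2 * (L - x) = √(2 * (L - x)) ^ 2 := (Real.sq_sqrt (by linarith)).symm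
    _ ≤ ((r - r1) / t) ^ 2 := by gcongr

lemma dollard_phase_algebra {lam0 L b t ρ Q Φ F : ℝ} (hb : b ≠ 0) (ht : t ≠ 0) (hρ : ρ ≠ 0)
    (hL : lam0 + b ^ 2 / 2 = L) :
    (ρ * b - Q / b + Φ - t * L) - (ρ ^ 2 / (2 * t) - t * lam0 - t / ρ * Q)
        - (Φ + F)
      = -((t - ρ / b) ^ 2 * b ^ 2) / (2 * t) + Q * (t - ρ / b) / ρ - F := by
  subst hL
  field_simp
  ring

lemma phase_error_eq {q : ℝ → ℝ} {lam0 L r1 r t : ℝ} (hq : ContinuousOn q (Icc r1 r))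
    (hqL : ∀ s ∈ Icc r1 r, q s < L) (hL : lam0 < L) (hr : r1 < r) (ht0 : t ≠ 0)
    (ht : t = ∫ s in r1..r, 1 / √(2 * (L - q s)))
    (hR : IntegrableOn (fun s => √(2 * (L - q s)) - dollardMomentum lam0 L (q s)) (Ioi r1)) :
    ((∫ s in r1..r, √(2 * (L - q s))) - t * L)
        - ((r - r1) ^ 2 / (2 * t) - t * lam0 - (t / (r - r1)) * ∫ s in r1..r, (q s - lam0))
        - ∫ s in Ioi r1, (√(2 * (L - q s)) - dollardMomentum lam0 L (q s))
      = -((∫ s in r1..r, (1 / √(2 * (L - q s)) - 1 / √(2 * (L - lam0)))) ^ 2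
            * √(2 * (L - lam0)) ^ 2) / (2 * t)
        + (∫ s in r1..r, (q s - lam0))
            * (∫ s in r1..r, (1 / √(2 * (L - q s)) - 1 / √(2 * (L - lam0)))) / (r - r1)
        - ∫ s in Ioi r, (√(2 * (L - q s)) - dollardMomentum lam0 L (q s)) := by
  set b := √(2 * (L - lam0))
  have hb : 0 < b := Real.sqrt_pos.2 (by linarith)
  have hq_int : IntervalIntegrable (fun s => q s - lam0) volume r1 r :=
    (hq.sub continuousOn_const).intervalIntegrable_of_Icc hr.le
  have hinv_int := intervalIntegrable_one_div_sqrt_two_mul_sub hr.le hq hqL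
  have hD_int : IntervalIntegrable (fun s => dollardMomentum lam0 L (q s)) volume r1 r :=
    intervalIntegrable_const.sub (hq_int.div_const b)
  have hD : ∫ s in r1..r, dollardMomentum lam0 L (q s)
      = (r - r1) * b - (∫ s in r1..r, (q s - lam0)) / b := by
    unfold dollardMomentum
    rw [intervalIntegral.integral_sub intervalIntegrable_const (hq_int.div_const b),
      intervalIntegral.integral_const, smul_eq_mul, intervalIntegral.integral_div]
  have h_momentum : ∫ s in r1..r, √(2 * (L - q s))
      = (r - r1) * b - (∫ s in r1..r, (q s - lam0)) / b
        + ∫ s in r1..r, (√(2 * (L - q s)) - dollardMomentum lam0 L (q s)) := by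
    rw [intervalIntegral.integral_sub ((by fun_prop : ContinuousOn (fun s => √(2 * (L - q s)))
      (Icc r1 r)).intervalIntegrable_of_Icc hr.le) hD_int, hD]
    ring
  have h_time : ∫ s in r1..r, (1 / √(2 * (L - q s)) - 1 / b) = t - (r - r1) / b := by
    rw [intervalIntegral.integral_sub hinv_int intervalIntegrable_const,
      intervalIntegral.integral_const, smul_eq_mul, ← ht, mul_one_div]
  have h_shift :=
    (intervalIntegral.integral_interval_add_Ioi hR (hR.mono_set (Ioi_subset_Ioi hr.le))).symm
  have hLb : lam0 + b ^ 2 / 2 = L := by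
    rw [Real.sq_sqrt (by linarith)]
    ring
  rw [h_momentum, h_time, h_shift]
  exact dollard_phase_algebra hb.ne' ht0 (sub_pos.2 hr).ne' hLb

lemma rpow_one_sub_div_le_of_le_mul {r t R ε : ℝ} (hr : 0 ≤ r) (ht : 0 < t) (hε : ε ≤ 1)
    (hrR : r ≤ R * t) : r ^ (1 - ε) / t ≤ R ^ (1 - ε) * t ^ (-ε) := by
  have hR : 0 ≤ R := nonneg_of_mul_nonneg_left (hr.trans hrR) ht
  calc r ^ (1 - ε) / t ≤ (R * t) ^ (1 - ε) / t := by gcongr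
    _ = R ^ (1 - ε) * t ^ (-ε) := by
        rw [Real.mul_rpow hR ht.le, mul_div_assoc, ← Real.rpow_sub_one ht.ne']
        ring_nf

lemma abs_phase_error_le {G Q F b B ρ r t ε μ R MG MQ K : ℝ} (ht : 0 < t) (hμ : 0 < μ)
    (hε0 : 0 ≤ ε) (hε1 : ε ≤ 1) (hρ : μ * t ≤ ρ) (hρr : ρ ≤ r) (hrR : r ≤ R * t)
    (hG : |G| ≤ MG * r ^ ((1 - ε) / 2)) (hQ : |Q| ≤ MQ * r ^ ((1 - ε) / 2))
    (hF : |F| ≤ K * r ^ (-ε)) (hb : b ^ 2 ≤ B) :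
    |-(G ^ 2 * b ^ 2) / (2 * t) + Q * G / ρ - F|
      ≤ (MG ^ 2 * B * R ^ (1 - ε) / 2 + MQ * MG * R ^ (1 - ε) / μ + K * μ ^ (-ε)) * t ^ (-ε) := by
  have hρ0 : 0 < ρ := (mul_pos hμ ht).trans_le hρ
  have hr0 : 0 < r := hρ0.trans_le hρr
  have hrα : r ^ ((1 - ε) / 2) * r ^ ((1 - ε) / 2) = r ^ (1 - ε) := by
    rw [← Real.rpow_add hr0]
    ring_nf
  have hrt := rpow_one_sub_div_le_of_le_mul hr0.le ht hε1 hrR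
  have hMG : 0 ≤ MG :=
    nonneg_of_mul_nonneg_left ((abs_nonneg _).trans hG) (Real.rpow_pos_of_pos hr0 _)
  have hMQ : 0 ≤ MQ :=
    nonneg_of_mul_nonneg_left ((abs_nonneg _).trans hQ) (Real.rpow_pos_of_pos hr0 _)
  have hK : 0 ≤ K :=
    nonneg_of_mul_nonneg_left ((abs_nonneg _).trans hF) (Real.rpow_pos_of_pos hr0 _)
  have hB : 0 ≤ B := (sq_nonneg b).trans hb
  have h_quad : |-(G ^ 2 * b ^ 2) / (2 * t)| ≤ MG ^ 2 * B * R ^ (1 - ε) / 2 * t ^ (-ε) :=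
    calc |-(G ^ 2 * b ^ 2) / (2 * t)| = |G| ^ 2 * b ^ 2 / (2 * t) := by
          rw [abs_div, abs_neg, abs_of_nonneg (by positivity), abs_of_pos (by positivity), sq_abs]
      _ ≤ (MG * r ^ ((1 - ε) / 2)) ^ 2 * B / (2 * t) := by gcongr
      _ = MG ^ 2 * B / 2 * (r ^ (1 - ε) / t) := by rw [← hrα]; field_simp
      _ ≤ MG ^ 2 * B / 2 * (R ^ (1 - ε) * t ^ (-ε)) := by gcongr
      _ = MG ^ 2 * B * R ^ (1 - ε) / 2 * t ^ (-ε) := by ring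
  have h_cross : |Q * G / ρ| ≤ MQ * MG * R ^ (1 - ε) / μ * t ^ (-ε) :=
    calc |Q * G / ρ| = |Q| * |G| / ρ := by rw [abs_div, abs_mul, abs_of_pos hρ0]
      _ ≤ (MQ * r ^ ((1 - ε) / 2)) * (MG * r ^ ((1 - ε) / 2)) / (μ * t) := by gcongr
      _ = MQ * MG / μ * (r ^ (1 - ε) / t) := by rw [← hrα]; field_simp
      _ ≤ MQ * MG / μ * (R ^ (1 - ε) * t ^ (-ε)) := by gcongr
      _ = MQ * MG * R ^ (1 - ε) / μ * t ^ (-ε) := by ring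
  have h_tail : |F| ≤ K * μ ^ (-ε) * t ^ (-ε) :=
    calc |F| ≤ K * r ^ (-ε) := hF
      _ ≤ K * (μ * t) ^ (-ε) := mul_le_mul_of_nonneg_left
          (Real.rpow_le_rpow_of_nonpos (mul_pos hμ ht) (hρ.trans hρr) (neg_nonpos.2 hε0)) hK
      _ = K * μ ^ (-ε) * t ^ (-ε) := by rw [Real.mul_rpow hμ.le ht.le]; ring
  calc |-(G ^ 2 * b ^ 2) / (2 * t) + Q * G / ρ - F|
      ≤ |-(G ^ 2 * b ^ 2) / (2 * t)| + |Q * G / ρ| + |F| := by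
        simpa only [sub_eq_add_neg, abs_neg] using abs_add_three _ _ (-F)
    _ ≤ _ := by linarith

section Potential

variable {lam0 lam1 r1 C ε : ℝ} {q : ℝ → ℝ}

lemma integrableOn_sqrt_sub_dollardMomentum (hlam : lam0 < lam1) (hr1 : 0 < r1) (hε : 0 < ε)
    (hq : ContinuousOn q (Ici r1)) (hqu : ∀ s, r1 ≤ s → q s ≤ (lam0 + lam1) / 2)
    (hqd : ∀ s, r1 ≤ s → |q s - lam0| ≤ C * s ^ (-(1 + ε) / 2)) {lam : ℝ} (hl : lam1 ≤ lam) :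
    IntegrableOn (fun s => √(2 * (lam - q s)) - dollardMomentum lam0 lam (q s)) (Ioi r1) := by
  have hq' := hq.mono Ioi_subset_Ici_self
  exact integrableOn_Ioi_of_abs_le_rpow hr1 (by linarith : -(1 + ε) < -1)
    (by unfold dollardMomentum; fun_prop) fun s hs =>
      abs_sqrt_sub_dollardMomentum_le_rpow hlam hl (hqu s hs.le) (hr1.trans hs) (hqd s hs.le)

lemma abs_integral_one_div_sqrt_sub_le_s12 (hlam : lam0 < lam1) (hr1 : 0 < r1) (hε1 : ε < 1)
    (hqu : ∀ s, r1 ≤ s → q s ≤ (lam0 + lam1) / 2)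
    (hqd : ∀ s, r1 ≤ s → |q s - lam0| ≤ C * s ^ (-(1 + ε) / 2)) {L r : ℝ} (hL : lam1 ≤ L)
    (hr : r1 ≤ r) :
    |∫ s in r1..r, (1 / √(2 * (L - q s)) - 1 / √(2 * (L - lam0)))|
      ≤ C / √(lam1 - lam0) ^ 3 / ((1 - ε) / 2) * r ^ ((1 - ε) / 2) := by
  have h := abs_intervalIntegral_le_of_abs_le_rpow (c := C / √(lam1 - lam0) ^ 3) hr1 hr
    (by linarith : -1 < -(1 + ε) / 2) fun s hs =>
      (abs_one_div_sqrt_sub_one_div_sqrt_le_s12 hlam hL (hqu s hs.1)).trans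
        (by rw [div_mul_eq_mul_div]; gcongr; exact hqd s hs.1)
  rwa [show -(1 + ε) / 2 + 1 = (1 - ε) / 2 by ring] at h

lemma abs_integral_sub_le_rpow (hr1 : 0 < r1) (hε1 : ε < 1)
    (hqd : ∀ s, r1 ≤ s → |q s - lam0| ≤ C * s ^ (-(1 + ε) / 2)) {r : ℝ} (hr : r1 ≤ r) :
    |∫ s in r1..r, (q s - lam0)| ≤ C / ((1 - ε) / 2) * r ^ ((1 - ε) / 2) := by
  have h := abs_intervalIntegral_le_of_abs_le_rpow hr1 hr (by linarith : -1 < -(1 + ε) / 2)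
    fun s hs => hqd s hs.1
  rwa [show -(1 + ε) / 2 + 1 = (1 - ε) / 2 by ring] at h

lemma abs_integral_Ioi_sqrt_sub_dollardMomentum_le (hlam : lam0 < lam1) (hr1 : 0 < r1)
    (hε : 0 < ε) (hqu : ∀ s, r1 ≤ s → q s ≤ (lam0 + lam1) / 2)
    (hqd : ∀ s, r1 ≤ s → |q s - lam0| ≤ C * s ^ (-(1 + ε) / 2)) {L r : ℝ} (hL : lam1 ≤ L)
    (hr : r1 ≤ r) :
    |∫ s in Ioi r, (√(2 * (L - q s)) - dollardMomentum lam0 L (q s))|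
      ≤ C ^ 2 / (2 * √(lam1 - lam0) ^ 3) / ε * r ^ (-ε) := by
  have hr0 : 0 < r := hr1.trans_le hr
  have h := abs_integral_Ioi_le_of_abs_le_rpow hr0 (by linarith : -(1 + ε) < -1) fun s hs =>
    abs_sqrt_sub_dollardMomentum_le_rpow hlam hL (hqu s (hr.trans hs.le)) (hr0.trans hs)
      (hqd s (hr.trans hs.le))
  rwa [show -(1 + ε) + 1 = -ε by ring, neg_neg] at h

lemma sq_sqrt_two_mul_sub_le_of_eq_integral (hlam : lam0 < lam1) (hq : ContinuousOn q (Ici r1))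
    (hqu : ∀ s, r1 ≤ s → q s ≤ (lam0 + lam1) / 2) {t L r μ : ℝ} (hL : lam1 < L) (hr : r1 < r)
    (ht0 : 0 < t) (ht : t = ∫ s in r1..r, 1 / √(2 * (L - q s))) (hμ : (r - r1) / t ≤ μ) :
    √(2 * (L - lam0)) ^ 2 ≤ μ ^ 2 + (lam1 - lam0) := by
  have h_speed := two_mul_sub_le_sq_of_eq_integral hr ht0 (hq.mono Icc_subset_Ici_self)
    (fun s hs => hqu s hs.1) (by linarith : (lam0 + lam1) / 2 < L) ht
  have : ((r - r1) / t) ^ 2 ≤ μ ^ 2 := by gcongr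
  rw [Real.sq_sqrt (by linarith)]
  linarith

lemma exists_phase_error_le (hlam : lam0 < lam1) (hr1 : 1 ≤ r1) (hC : 0 < C) (hε : 0 < ε)
    (hε1 : ε < 1) (hq : ContinuousOn q (Ici r1)) (hqu : ∀ s, r1 ≤ s → q s ≤ (lam0 + lam1) / 2)
    (hqd : ∀ s, r1 ≤ s → |q s - lam0| ≤ C * s ^ (-(1 + ε) / 2)) {μ1 μ2 : ℝ} (hμ1 : 0 < μ1)
    (hμ12 : μ1 < μ2) :
    ∃ C' > 0, ∀ t L r, 1 ≤ t → lam1 < L → r1 < r → t = ∫ s in r1..r, 1 / √(2 * (L - q s)) →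
      μ1 ≤ (r - r1) / t → (r - r1) / t ≤ μ2 →
      |((∫ s in r1..r, √(2 * (L - q s))) - t * L)
          - ((r - r1) ^ 2 / (2 * t) - t * lam0 - (t / (r - r1)) * ∫ s in r1..r, (q s - lam0))
          - ∫ s in Ioi r1, (√(2 * (L - q s)) - dollardMomentum lam0 L (q s))|
        ≤ C' * t ^ (-ε) := by
  set κ := √(lam1 - lam0) ^ 3
  have hκ : 0 < κ := pow_pos (Real.sqrt_pos.2 (sub_pos.2 hlam)) 3
  have hr1' : 0 < r1 := by linarith
  have h1ε : 0 < 1 - ε := by linarith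
  have hμ2 : 0 < μ2 := hμ1.trans hμ12
  have hd : 0 < lam1 - lam0 := sub_pos.2 hlam
  refine ⟨(C / κ / ((1 - ε) / 2)) ^ 2 * (μ2 ^ 2 + (lam1 - lam0)) * (r1 + μ2) ^ (1 - ε) / 2
      + C / ((1 - ε) / 2) * (C / κ / ((1 - ε) / 2)) * (r1 + μ2) ^ (1 - ε) / μ1
      + C ^ 2 / (2 * κ) / ε * μ1 ^ (-ε), by positivity,
    fun t L r ht hL hr ht_eq hμ1t hμ2t => ?_⟩
  have ht0 : 0 < t := by linarith
  have hρ : μ1 * t ≤ r - r1 := (le_div_iff₀ ht0).1 hμ1t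
  have hrR : r ≤ (r1 + μ2) * t := by
    have : r1 ≤ r1 * t := le_mul_of_one_le_right hr1'.le ht
    linarith [(div_le_iff₀ ht0).1 hμ2t]
  rw [phase_error_eq (hq.mono Icc_subset_Ici_self) (fun s hs => by linarith [hqu s hs.1])
    (by linarith) hr ht0.ne' ht_eq
    (integrableOn_sqrt_sub_dollardMomentum hlam hr1' hε hq hqu hqd hL.le)]
  exact abs_phase_error_le ht0 hμ1 hε.le hε1.le hρ (by linarith) hrR
    (abs_integral_one_div_sqrt_sub_le_s12 hlam hr1' hε1 hqu hqd hL.le hr.le)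
    (abs_integral_sub_le_rpow hr1' hε1 hqd hr.le)
    (abs_integral_Ioi_sqrt_sub_dollardMomentum_le hlam hr1' hε hqu hqd hL.le hr.le)
    (sq_sqrt_two_mul_sub_le_of_eq_integral hlam hq hqu hL hr ht0 ht_eq hμ2t)

end Potential

theorem dollard_phase_comparison_general
    (lam0 lam1 r1 C ε : ℝ)
    (hlam : lam0 < lam1) (hr1 : 1 ≤ r1)
    (hC : 0 < C) (hε : 0 < ε) (hε1 : ε < 1)
    (w q : ℝ → ℝ)
    (hw1 : ∀ s, r1 ≤ s → w s = 1)
    (hq : ContinuousOn q (Set.Ici r1))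
    (hqu : ∀ s, r1 ≤ s → q s ≤ (lam0 + lam1) / 2)
    (hqd : ∀ s, r1 ≤ s → |q s - lam0| ≤ C * s ^ (-(1 + ε) / 2))
    (T : ℝ → ℝ → ℝ)
    (hT : ∀ lam r, T lam r = ∫ s in r1..r, w s / Real.sqrt (2 * (lam - q s)))
    (Ωc : Set (ℝ × ℝ))
    (hΩc : Ωc = {p : ℝ × ℝ | 0 < p.1 ∧ r1 < p.2 ∧ p.1 < T lam1 p.2})
    (lamc : ℝ → ℝ → ℝ)
    (hlamc : ∀ p ∈ Ωc, lam1 < lamc p.1 p.2 ∧ T (lamc p.1 p.2) p.2 = p.1)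
    (μ1 μ2 : ℝ) (hμ1 : 0 < μ1) (hμ12 : μ1 < μ2) :
    (∀ lam : ℝ, lam1 ≤ lam →
      IntegrableOn (fun s =>
        Real.sqrt (2 * (lam - q s))
          - (Real.sqrt (2 * (lam - lam0))
              - (q s - lam0) / Real.sqrt (2 * (lam - lam0))))
        (Set.Ioi r1)) ∧
    ∀ K1 Kdo : ℝ → ℝ → ℝ, ∀ θ : ℝ → ℝ,
      (∀ t r, K1 t r
        = (∫ s in r1..r, Real.sqrt (2 * (lamc t r - q s))) - t * lamc t r) →
      (∀ t r, Kdo t r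
        = (r - r1) ^ 2 / (2 * t) - t * lam0
          - (t / (r - r1)) * ∫ s in r1..r, (q s - lam0)) →
      (∀ lam, θ lam
        = ∫ s in Set.Ioi r1,
            (Real.sqrt (2 * (lam - q s))
              - (Real.sqrt (2 * (lam - lam0))
                  - (q s - lam0) / Real.sqrt (2 * (lam - lam0))))) →
      ∃ C' > 0, ∃ ε' : ℝ, 0 < ε' ∧ ∃ T0 > 0, ∀ t : ℝ, T0 ≤ t → ∀ r : ℝ, (t, r) ∈ Ωc →
        μ1 ≤ (r - r1) / t → (r - r1) / t ≤ μ2 →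
        |K1 t r - Kdo t r - θ (lamc t r)| ≤ C' * t ^ (-ε') := by
  refine ⟨fun lam hl => integrableOn_sqrt_sub_dollardMomentum hlam (by linarith) hε hq hqu hqd hl,
    fun K1 Kdo θ hK1 hKdo hθ => ?_⟩
  obtain ⟨C', hC', h_bound⟩ := exists_phase_error_le hlam hr1 hC hε hε1 hq hqu hqd hμ1 hμ12
  refine ⟨C', hC', ε, hε, 1, one_pos, fun t ht r hmem hμ1t hμ2t => ?_⟩
  obtain ⟨hL, hTL⟩ : lam1 < lamc t r ∧ T (lamc t r) r = t := hlamc (t, r) hmem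
  have hr : r1 < r := (hΩc ▸ hmem).2.1
  have ht_eq : t = ∫ s in r1..r, 1 / √(2 * (lamc t r - q s)) := by
    refine hTL.symm.trans ((hT _ _).trans (intervalIntegral.integral_congr fun s hs => ?_))
    rw [uIcc_of_le hr.le] at hs
    simp only [hw1 s hs.1]
  rw [hK1, hKdo, hθ]
  exact h_bound t (lamc t r) r ht hL hr ht_eq hμ1t hμ2t

/-- Phase comparison establishing (4.14) in the proof of the
paper's Theorem 2.11: with the exact phase `K₁`, the Dollard phase `K_do` and the
phase shift `θ(λ) = ∫_{r₁}^∞ (√(2(λ−q)) − b_do(λ,·)) ds` (an absolutely convergent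
integral), there are `C′, ε′ > 0` and `T₀ > 0` such that
`|K₁(t,r) − K_do(t,r) − θ(λ_c(t,r))| ≤ C′·t^{−ε′}` for all `t ≥ T₀` and `r` with
`(t,r) ∈ Ω_c` and `μ₁ ≤ (r−r₁)/t ≤ μ₂`. -/
theorem dollard_phase_comparison
    (lam0 lam1 r1 c1 c2 m C ε : ℝ)
    (hlam : lam0 < lam1) (hr1 : 1 ≤ r1) (hc1 : 0 < c1) (hc12 : c1 ≤ c2)
    (hm : m ≤ (lam0 + lam1) / 2)
    (hC : 0 < C) (hε : 0 < ε) (hε1 : ε < 1)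
    (w q : ℝ → ℝ)
    (hw : ContinuousOn w (Set.Ici r1))
    (hwl : ∀ s, r1 ≤ s → c1 ≤ w s) (hwu : ∀ s, r1 ≤ s → w s ≤ c2)
    (hw1 : ∀ s, r1 ≤ s → w s = 1)
    (hq : ContinuousOn q (Set.Ici r1))
    (hql : ∀ s, r1 ≤ s → m ≤ q s) (hqu : ∀ s, r1 ≤ s → q s ≤ (lam0 + lam1) / 2)
    (hqd : ∀ s, r1 ≤ s → |q s - lam0| ≤ C * s ^ (-(1 + ε) / 2))
    (T : ℝ → ℝ → ℝ)
    (hT : ∀ lam r, T lam r = ∫ s in r1..r, w s / Real.sqrt (2 * (lam - q s)))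
    (Ωc : Set (ℝ × ℝ))
    (hΩc : Ωc = {p : ℝ × ℝ | 0 < p.1 ∧ r1 < p.2 ∧ p.1 < T lam1 p.2})
    (lamc : ℝ → ℝ → ℝ)
    (hlamc : ∀ p ∈ Ωc, lam1 < lamc p.1 p.2 ∧ T (lamc p.1 p.2) p.2 = p.1)
    (μ1 μ2 : ℝ) (hμ1 : 0 < μ1) (hμ12 : μ1 < μ2) :
    (∀ lam : ℝ, lam1 ≤ lam →
      IntegrableOn (fun s =>
        Real.sqrt (2 * (lam - q s))
          - (Real.sqrt (2 * (lam - lam0))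
              - (q s - lam0) / Real.sqrt (2 * (lam - lam0))))
        (Set.Ioi r1)) ∧
    ∀ K1 Kdo : ℝ → ℝ → ℝ, ∀ θ : ℝ → ℝ,
      (∀ t r, K1 t r
        = (∫ s in r1..r, Real.sqrt (2 * (lamc t r - q s))) - t * lamc t r) →
      (∀ t r, Kdo t r
        = (r - r1) ^ 2 / (2 * t) - t * lam0
          - (t / (r - r1)) * ∫ s in r1..r, (q s - lam0)) →
      (∀ lam, θ lam
        = ∫ s in Set.Ioi r1,
            (Real.sqrt (2 * (lam - q s))
              - (Real.sqrt (2 * (lam - lam0))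
                  - (q s - lam0) / Real.sqrt (2 * (lam - lam0))))) →
      ∃ C' > 0, ∃ ε' : ℝ, 0 < ε' ∧ ∃ T0 > 0, ∀ t : ℝ, T0 ≤ t → ∀ r : ℝ, (t, r) ∈ Ωc →
        μ1 ≤ (r - r1) / t → (r - r1) / t ≤ μ2 →
        |K1 t r - Kdo t r - θ (lamc t r)| ≤ C' * t ^ (-ε') :=
  dollard_phase_comparison_general lam0 lam1 r1 C ε hlam hr1 hC hε hε1 w q hw1 hq hqu hqd T hT Ωc
    hΩc lamc hlamc μ1 μ2 hμ1 hμ12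
end
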